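/- arXiv:0803.0892 — 7 statements merged into one kernel-verified Lean document; each statement's English description precedes it below -/
import Mathlib

section
/- Let G be a linear subspace of K^n consisting of all vectors λ with Σ λ_i ℓ_i = 0, where ℓ₁,…,ℓ_n span the linear forms of S = K[∂₁,…,∂_d]. Let G act on R = K[x₁,…,x_n,y₁,…,y_n] by x_i ↦ x_i, y_i ↦ y_i + λ_i x_i. Then for each (r,u) ∈ ℕ^{n+1} the graded component R^G_{(r,u)} of the invariant ring is isomorphic as a K-vector space to the space of homogeneous polynomials of degree r in K[z₁,…,z_d] annihilated by ℓ_i^{u_i+1} (as differential operators) for all i. -/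
/-!
Let `σ_A : K[z] → K[w]` be the substitution `zᵢ ↦ Σⱼ aᵢⱼ wⱼ`, i.e. `(σ_A f)(w) = f(A w)`. By the
chain rule `σ_A ∘ ℓⱼ = ∂/∂wⱼ ∘ σ_A`, and in characteristic zero `(∂/∂wⱼ)^(uⱼ+1)` kills exactly the
polynomials of degree at most `uⱼ` in `wⱼ`. Since the columns of `A` span, `A` has a right inverse
`B`, so `σ_B ∘ σ_A = id`; and a polynomial `q` invariant under translation by `G = ker A` satisfies
`q(w) = q(B A w)`, i.e. `σ_A (σ_B q) = q`. Hence `σ_A` identifies the degree-`r` solutions of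
`ℓⱼ^(uⱼ+1) f = 0` with the `G`-translation invariant polynomials of degree `r` and of degree at most
`uⱼ` in each `wⱼ`. Homogenizing `w^b ↦ x^(u-b) y^b` identifies these with the `(r,u)`-component of
`R^G`, because setting `x = 1, y = w` turns the Nagata action of `λ` into translation by `λ`.
-/

open MvPolynomial Matrix

def LinearEquiv.ofInvOn {R M N : Type*} [Semiring R] [AddCommMonoid M] [AddCommMonoid N]
    [Module R M] [Module R N] {P : Submodule R M} {Q : Submodule R N} (f : M →ₗ[R] N)
    (g : N →ₗ[R] M) (hf : Set.MapsTo f P Q) (hg : Set.MapsTo g Q P) (hfg : Set.InvOn g f P Q) :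
    P ≃ₗ[R] Q :=
  .ofLinearMap (f.restrict fun _ => (hf ·)) (g.restrict fun _ => (hg ·))
    (LinearMap.ext fun y => Subtype.ext (hfg.2 y.2))
    (LinearMap.ext fun x => Subtype.ext (hfg.1 x.2))

theorem Matrix.exists_mul_eq_one_of_span_col_eq_top {R ι κ : Type*} [CommRing R] [Fintype ι]
    [DecidableEq ι] [Fintype κ] (A : Matrix ι κ R)
    (hA : Submodule.span R (Set.range A.col) = ⊤) : ∃ B : Matrix κ ι R, A * B = 1 := by
  classical
  obtain ⟨g, hg⟩ := A.mulVecLin.exists_rightInverse_of_surjective (by rw [range_mulVecLin, hA])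
  refine ⟨LinearMap.toMatrix' g, ?_⟩
  rw [← LinearMap.toMatrix'_toLin' A, Matrix.toLin'_apply', ← LinearMap.toMatrix'_comp, hg,
    LinearMap.toMatrix'_id]

namespace MvPolynomial

section Substitution

variable {R σ τ : Type*} [CommSemiring R]

theorem pderiv_aeval [Fintype σ] (g : σ → MvPolynomial τ R) (j : τ) (p : MvPolynomial σ R) :
    pderiv j (aeval g p) = ∑ i, pderiv j (g i) * aeval g (pderiv i p) := by
  classical
  induction p using MvPolynomial.induction_on with
  | C a => simp only [aeval_C, algebraMap_eq, pderiv_C, map_zero, mul_zero, Finset.sum_const_zero]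
  | add p q hp hq => simp only [map_add, hp, hq, mul_add, Finset.sum_add_distrib]
  | mul_X p i hp =>
    simp only [map_mul, aeval_X, Derivation.leibniz, hp, pderiv_X, smul_eq_mul, map_add, mul_add,
      Finset.sum_add_distrib, Finset.mul_sum, Pi.single_apply, apply_ite, map_zero, mul_one,
      mul_zero, Finset.sum_ite_eq, Finset.mem_univ, if_true]
    congr 1
    · ring
    · exact Finset.sum_congr rfl fun _ _ => by ring

theorem IsWeightedHomogeneous.aeval {M : Type*} [AddCommMonoid M] {w₁ : σ → M} {w₂ : τ → M}
    {p : MvPolynomial σ R} {m : M} (hp : p.IsWeightedHomogeneous w₁ m) (g : σ → MvPolynomial τ R)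
    (hg : ∀ i, (g i).IsWeightedHomogeneous w₂ (w₁ i)) :
    (aeval g p).IsWeightedHomogeneous w₂ m := by
  rw [aeval_eq_eval₂Hom, coe_eval₂Hom, eval₂]
  refine IsWeightedHomogeneous.sum _ _ _ fun b hb => ?_
  rw [← zero_add m]
  refine (isWeightedHomogeneous_C w₂ _).mul ?_
  rw [← hp (mem_support_iff.mp hb), Finsupp.weight_apply, Finsupp.sum, Finsupp.prod]
  exact IsWeightedHomogeneous.prod _ _ _ fun i _ => (hg i).pow _

theorem isWeightedHomogeneous_prodMk_iff {M N : Type*} [AddCommMonoid M] [AddCommMonoid N]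
    {w₁ : σ → M} {w₂ : σ → N} {p : MvPolynomial σ R} {m : M} {n : N} :
    p.IsWeightedHomogeneous (fun i => (w₁ i, w₂ i)) (m, n) ↔
      p.IsWeightedHomogeneous w₁ m ∧ p.IsWeightedHomogeneous w₂ n := by
  have hw : ∀ d : σ →₀ ℕ,
      Finsupp.weight (fun i => (w₁ i, w₂ i)) d = (Finsupp.weight w₁ d, Finsupp.weight w₂ d) :=
    fun d => by simp [Finsupp.weight_apply, Finsupp.sum, Prod.ext_iff, Prod.fst_sum, Prod.snd_sum]
  simp only [IsWeightedHomogeneous, hw, Prod.mk.injEq]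
  exact ⟨fun h => ⟨fun _ hd => (h hd).1, fun _ hd => (h hd).2⟩, fun h _ hd => ⟨h.1 hd, h.2 hd⟩⟩

end Substitution

section IteratedDerivative

variable {R σ : Type*} [CommRing R] [IsDomain R] [CharZero R]

theorem mem_support_pderiv_iff {j : σ} {p : MvPolynomial σ R} {b : σ →₀ ℕ} :
    b ∈ (pderiv j p).support ↔ b + Finsupp.single j 1 ∈ p.support := by
  simp only [mem_support_iff, coeff_pderiv, ne_eq, mul_eq_zero, not_or, Nat.cast_add_one_ne_zero,
    not_false_eq_true, and_true]

theorem pderiv_pow_apply_eq_zero_iff (j : σ) (m : ℕ) (p : MvPolynomial σ R) :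
    ((pderiv j).toLinearMap ^ m) p = 0 ↔ ∀ b ∈ p.support, b j < m := by
  induction m generalizing p with
  | zero => simp [MvPolynomial.ext_iff]
  | succ m ih =>
    rw [pow_succ, Module.End.mul_apply, Derivation.coeFn_coe, ih]
    constructor
    · intro h c hc
      obtain hcj | hcj := Nat.eq_zero_or_pos (c j)
      · omega
      · have hc' : c - Finsupp.single j 1 + Finsupp.single j 1 = c :=
          tsub_add_cancel_of_le (Finsupp.single_le_iff.mpr hcj)
        have := h _ (mem_support_pderiv_iff.mpr (hc'.symm ▸ hc))
        simp only [Finsupp.tsub_apply, Finsupp.single_eq_same] at this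
        omega
    · intro h b hb
      have := h _ (mem_support_pderiv_iff.mp hb)
      simp only [Finsupp.add_apply, Finsupp.single_eq_same] at this
      omega

end IteratedDerivative

section LinearSubst

variable {R ι κ μ : Type*} [CommSemiring R]

noncomputable def directionalDeriv [Fintype ι] (v : ι → R) : Module.End R (MvPolynomial ι R) :=
  ∑ i, v i • (pderiv i).toLinearMap

theorem directionalDeriv_apply [Fintype ι] (v : ι → R) (p : MvPolynomial ι R) :
    directionalDeriv v p = ∑ i, v i • pderiv i p := by
  simp [directionalDeriv]

noncomputable def translate (c : κ → R) : MvPolynomial κ R →ₐ[R] MvPolynomial κ R :=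
  aeval fun k => X k + C (c k)

theorem translate_X (c : κ → R) (k : κ) : translate c (X k) = X k + C (c k) :=
  aeval_X _ _

theorem eval_translate (c w : κ → R) (p : MvPolynomial κ R) :
    eval w (translate c p) = eval (w + c) p := by
  rw [← aeval_eq_eval, translate, comp_aeval_apply]
  simp only [map_add, aeval_X, aeval_C]
  rfl

variable [Fintype κ]

noncomputable def linearSubst (A : Matrix ι κ R) : MvPolynomial ι R →ₐ[R] MvPolynomial κ R :=
  aeval fun i => ∑ k, C (A i k) * X k

theorem linearSubst_X (A : Matrix ι κ R) (i : ι) :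
    linearSubst A (X i) = ∑ k, C (A i k) * X k :=
  aeval_X _ _

theorem linearSubst_comp [Fintype μ] (A : Matrix ι κ R) (B : Matrix κ μ R) :
    (linearSubst B).comp (linearSubst A) = linearSubst (A * B) := by
  ext i : 1
  simp only [AlgHom.comp_apply, linearSubst_X, map_sum, map_mul, algHom_C, algebraMap_eq,
    Matrix.mul_apply, Finset.mul_sum, Finset.sum_mul]
  rw [Finset.sum_comm]
  simp only [mul_assoc]

theorem linearSubst_one [DecidableEq κ] : linearSubst (1 : Matrix κ κ R) = AlgHom.id R _ := by
  ext i : 1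
  simp [linearSubst_X, Matrix.one_apply]

theorem linearSubst_linearSubst [Fintype ι] [DecidableEq ι] {A : Matrix ι κ R}
    {B : Matrix κ ι R} (hAB : A * B = 1) (p : MvPolynomial ι R) :
    linearSubst B (linearSubst A p) = p := by
  rw [← AlgHom.comp_apply, linearSubst_comp, hAB, linearSubst_one, AlgHom.id_apply]

theorem eval_linearSubst (A : Matrix ι κ R) (w : κ → R) (p : MvPolynomial ι R) :
    eval w (linearSubst A p) = eval (A *ᵥ w) p := by
  rw [← aeval_eq_eval, linearSubst, comp_aeval_apply]
  simp only [map_sum, map_mul, aeval_C, aeval_X]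
  rfl

theorem IsHomogeneous.linearSubst {p : MvPolynomial ι R} {r : ℕ} (hp : p.IsHomogeneous r)
    (A : Matrix ι κ R) : (linearSubst A p).IsHomogeneous r := by
  have := hp.aeval (S := R) (fun i => ∑ k, C (A i k) * X k) fun i =>
    IsHomogeneous.sum _ _ 1 fun k _ => isHomogeneous_C_mul_X (A i k) k
  rwa [one_mul] at this

theorem pderiv_linearSubst [Fintype ι] (A : Matrix ι κ R) (j : κ) (p : MvPolynomial ι R) :
    pderiv j (linearSubst A p) = linearSubst A (directionalDeriv (fun i => A i j) p) := by
  classical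
  rw [linearSubst, pderiv_aeval, directionalDeriv_apply, map_sum]
  refine Finset.sum_congr rfl fun i _ => ?_
  simp [pderiv_X, Pi.single_apply, smul_eq_C_mul]

theorem linearSubst_directionalDeriv_pow [Fintype ι] (A : Matrix ι κ R) (j : κ) (m : ℕ)
    (p : MvPolynomial ι R) :
    linearSubst A ((directionalDeriv (fun i => A i j) ^ m) p) =
      ((pderiv j).toLinearMap ^ m) (linearSubst A p) := by
  have hcomm : (pderiv j).toLinearMap ∘ₗ (linearSubst A).toLinearMap =
      (linearSubst A).toLinearMap ∘ₗ directionalDeriv (fun i => A i j) :=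
    LinearMap.ext (pderiv_linearSubst A j)
  exact (LinearMap.congr_fun (Module.End.commute_pow_left_of_commute hcomm m) p).symm

theorem translate_comp_linearSubst (A : Matrix ι κ R) {c : κ → R} (hc : A *ᵥ c = 0) :
    (translate c).comp (linearSubst A) = linearSubst A := by
  ext i : 1
  have hci : ∑ k, A i k * c k = 0 := congrFun hc i
  rw [AlgHom.comp_apply, linearSubst_X, map_sum]
  simp only [map_mul, translate_X, algHom_C, algebraMap_eq, mul_add, Finset.sum_add_distrib]
  rw [← Finset.sum_congr rfl fun k _ => C_mul (a := A i k) (a' := c k), ← map_sum, hci, map_zero,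
    add_zero]

end LinearSubst

theorem linearSubst_linearSubst_of_forall_translate {R ι κ : Type*} [CommRing R] [IsDomain R]
    [Infinite R] [Fintype ι] [DecidableEq ι] [Fintype κ] {A : Matrix ι κ R} {B : Matrix κ ι R}
    (hAB : A * B = 1) {q : MvPolynomial κ R} (hq : ∀ c, A *ᵥ c = 0 → translate c q = q) :
    linearSubst A (linearSubst B q) = q := by
  refine MvPolynomial.funext fun w => ?_
  have hker : A *ᵥ (B *ᵥ (A *ᵥ w) - w) = 0 := by
    rw [Matrix.mulVec_sub, Matrix.mulVec_mulVec, hAB, Matrix.one_mulVec, sub_self]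
  rw [eval_linearSubst, eval_linearSubst]
  conv_rhs => rw [← hq _ hker, eval_translate, add_sub_cancel]

section Homogenization

variable {R κ : Type*} [CommSemiring R]

noncomputable def nagata (c : κ → R) : MvPolynomial (κ ⊕ κ) R →ₐ[R] MvPolynomial (κ ⊕ κ) R :=
  aeval (Sum.elim (fun i => X (Sum.inl i)) (fun i => X (Sum.inr i) + C (c i) * X (Sum.inl i)))

noncomputable def dehomogenize : MvPolynomial (κ ⊕ κ) R →ₐ[R] MvPolynomial κ R :=
  aeval (Sum.elim 1 X)

theorem dehomogenize_comp_nagata (c : κ → R) :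
    dehomogenize.comp (nagata c) = (translate c).comp dehomogenize := by
  ext (i | i) : 1 <;> simp [dehomogenize, nagata, translate_X]

theorem IsWeightedHomogeneous.isHomogeneous_dehomogenize {F : MvPolynomial (κ ⊕ κ) R} {r : ℕ}
    (hF : F.IsWeightedHomogeneous (Sum.elim 0 1) r) : (dehomogenize F).IsHomogeneous r :=
  hF.aeval _ fun v => by
    rcases v with i | i
    · exact isWeightedHomogeneous_one R _
    · exact isWeightedHomogeneous_X R _ i

section Weights

variable [DecidableEq κ]

def pairWeight : κ ⊕ κ → κ → ℕ :=
  Sum.elim (fun i => Pi.single i 1) (fun i => Pi.single i 1)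

def nagataWeight : κ ⊕ κ → ℕ × (κ → ℕ) :=
  Sum.elim (fun i => ((0 : ℕ), Pi.single i 1)) (fun i => ((1 : ℕ), Pi.single i 1))

theorem isWeightedHomogeneous_nagataWeight_iff {F : MvPolynomial (κ ⊕ κ) R} {r : ℕ}
    {u : κ → ℕ} :
    F.IsWeightedHomogeneous nagataWeight (r, u) ↔
      F.IsWeightedHomogeneous (Sum.elim 0 1) r ∧ F.IsWeightedHomogeneous pairWeight u := by
  have : (nagataWeight : κ ⊕ κ → ℕ × (κ → ℕ)) = fun v => (Sum.elim 0 1 v, pairWeight v) := by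
    ext (i | i) : 1 <;> rfl
  rw [this, isWeightedHomogeneous_prodMk_iff]

theorem IsWeightedHomogeneous.nagata {F : MvPolynomial (κ ⊕ κ) R} {u : κ → ℕ}
    (hF : F.IsWeightedHomogeneous pairWeight u) (c : κ → R) :
    (nagata c F).IsWeightedHomogeneous pairWeight u :=
  hF.aeval _ fun v => by
    rcases v with i | i
    · exact isWeightedHomogeneous_X R _ (Sum.inl i)
    · exact (isWeightedHomogeneous_X R _ (Sum.inr i)).add
        ((isWeightedHomogeneous_X R pairWeight (Sum.inl i)).C_mul (c i))

end Weights

variable [Fintype κ]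

theorem weight_elim_zero_one (m : κ ⊕ κ →₀ ℕ) :
    Finsupp.weight (Sum.elim (0 : κ → ℕ) 1) m = ∑ i, m (Sum.inr i) := by
  simp [Finsupp.weight_eq_sum, Fintype.sum_sum_type]

theorem weight_pairWeight_apply [DecidableEq κ] (m : κ ⊕ κ →₀ ℕ) (k : κ) :
    Finsupp.weight pairWeight m k = m (Sum.inl k) + m (Sum.inr k) := by
  simp [Finsupp.weight_eq_sum, Fintype.sum_sum_type, pairWeight, Pi.single_apply]

theorem dehomogenize_monomial (m : κ ⊕ κ →₀ ℕ) (a : R) :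
    dehomogenize (monomial m a) =
      monomial (Finsupp.equivFunOnFinite.symm fun i => m (Sum.inr i)) a := by
  rw [dehomogenize, aeval_monomial, monomial_eq, algebraMap_eq,
    Finsupp.prod_fintype _ _ fun _ => pow_zero _, Finsupp.prod_fintype _ _ fun _ => pow_zero _,
    Fintype.prod_sum_type]
  simp

/-- `w^b ↦ x^(u-b) y^b`; the subtraction truncates, so this is only sensible for `b ≤ u`. -/
noncomputable def homogenize (u : κ → ℕ) : MvPolynomial κ R →ₗ[R] MvPolynomial (κ ⊕ κ) R :=
  AddMonoidAlgebra.mapDomainLinearMap R R fun b =>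
    Finsupp.sumElim (Finsupp.equivFunOnFinite.symm u - b) b

theorem homogenize_monomial (u : κ → ℕ) (b : κ →₀ ℕ) (a : R) :
    homogenize u (monomial b a) =
      monomial (Finsupp.sumElim (Finsupp.equivFunOnFinite.symm u - b) b) a := by
  rw [← single_eq_monomial, ← single_eq_monomial]
  exact AddMonoidAlgebra.mapDomainLinearMap_single _ _ _

theorem dehomogenize_homogenize (u : κ → ℕ) (p : MvPolynomial κ R) :
    dehomogenize (homogenize u p) = p := by
  induction p using MvPolynomial.induction_on' with
  | monomial b a =>
    rw [homogenize_monomial, dehomogenize_monomial]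
    congr
    ext i
    simp
  | add p q hp hq => rw [map_add, map_add, hp, hq]

theorem isWeightedHomogeneous_homogenize {M : Type*} [AddCommMonoid M] {W : κ ⊕ κ → M} {m : M}
    {u : κ → ℕ} {p : MvPolynomial κ R}
    (h : ∀ b ∈ p.support,
      Finsupp.weight W (Finsupp.sumElim (Finsupp.equivFunOnFinite.symm u - b) b) = m) :
    (homogenize u p).IsWeightedHomogeneous W m := by
  rw [← support_sum_monomial_coeff p, map_sum]
  exact IsWeightedHomogeneous.sum _ _ _ fun b hb => by
    rw [homogenize_monomial]
    exact isWeightedHomogeneous_monomial _ _ _ (h b hb)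

variable [DecidableEq κ] {u : κ → ℕ} {F : MvPolynomial (κ ⊕ κ) R}

theorem homogenize_dehomogenize (hF : F.IsWeightedHomogeneous pairWeight u) :
    homogenize u (dehomogenize F) = F := by
  rw [← support_sum_monomial_coeff F, map_sum, map_sum]
  refine Finset.sum_congr rfl fun m hm => ?_
  rw [dehomogenize_monomial, homogenize_monomial]
  congr
  have hmu := congrFun (hF (mem_support_iff.mp hm))
  ext (i | i)
  · have := hmu i
    rw [weight_pairWeight_apply] at this
    simp only [Finsupp.coe_sumElim, Finsupp.coe_tsub, Finsupp.coe_equivFunOnFinite_symm,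
      Sum.elim_inl, Pi.sub_apply]
    omega
  · simp

theorem le_of_mem_support_dehomogenize (hF : F.IsWeightedHomogeneous pairWeight u) :
    ∀ b ∈ (dehomogenize F).support, ∀ j, b j ≤ u j := by
  suffices dehomogenize F ∈ restrictSupport R {b | ∀ j, b j ≤ u j} from
    fun b hb => (mem_restrictSupport_iff R).mp this hb
  rw [← support_sum_monomial_coeff F, map_sum]
  refine Submodule.sum_mem _ fun m hm => ?_
  rw [dehomogenize_monomial]
  refine (monomial_mem_restrictSupport R).mpr (Or.inl fun j => ?_)
  have := congrFun (hF (mem_support_iff.mp hm)) j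
  rw [weight_pairWeight_apply] at this
  rw [Finsupp.coe_equivFunOnFinite_symm]
  omega

end Homogenization

section Spaces

variable {R ι κ : Type*} [CommSemiring R]

noncomputable def pdeSolutions [Fintype ι] (A : Matrix ι κ R) (r : ℕ) (u : κ → ℕ) :
    Submodule R (MvPolynomial ι R) :=
  homogeneousSubmodule ι R r ⊓ ⨅ j, LinearMap.ker (directionalDeriv (fun i => A i j) ^ (u j + 1))

theorem mem_pdeSolutions [Fintype ι] {A : Matrix ι κ R} {r : ℕ} {u : κ → ℕ}
    {f : MvPolynomial ι R} :
    f ∈ pdeSolutions A r u ↔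
      f.IsHomogeneous r ∧ ∀ j, (directionalDeriv (fun i => A i j) ^ (u j + 1)) f = 0 := by
  simp [pdeSolutions]

noncomputable def boxInvariants (r : ℕ) (u : κ → ℕ) (S : Set (κ → R)) :
    Submodule R (MvPolynomial κ R) :=
  homogeneousSubmodule κ R r ⊓ restrictSupport R {b | ∀ j, b j ≤ u j} ⊓
    ⨅ c : S, LinearMap.eqLocus (translate c.1).toLinearMap LinearMap.id

theorem mem_boxInvariants {r : ℕ} {u : κ → ℕ} {S : Set (κ → R)} {p : MvPolynomial κ R} :
    p ∈ boxInvariants r u S ↔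
      p.IsHomogeneous r ∧ (∀ b ∈ p.support, ∀ j, b j ≤ u j) ∧ ∀ c ∈ S, translate c p = p := by
  simp [boxInvariants, mem_restrictSupport_iff, Set.subset_def, and_assoc]

noncomputable def nagataInvariants [DecidableEq κ] (r : ℕ) (u : κ → ℕ) (S : Set (κ → R)) :
    Submodule R (MvPolynomial (κ ⊕ κ) R) :=
  weightedHomogeneousSubmodule R nagataWeight (r, u) ⊓
    ⨅ c : S, LinearMap.eqLocus (nagata c.1).toLinearMap LinearMap.id

theorem mem_nagataInvariants [DecidableEq κ] {r : ℕ} {u : κ → ℕ} {S : Set (κ → R)}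
    {F : MvPolynomial (κ ⊕ κ) R} :
    F ∈ nagataInvariants r u S ↔ F.IsWeightedHomogeneous (Sum.elim 0 1) r ∧
      F.IsWeightedHomogeneous pairWeight u ∧ ∀ c ∈ S, nagata c F = F := by
  rw [nagataInvariants, Submodule.mem_inf, mem_weightedHomogeneousSubmodule,
    isWeightedHomogeneous_nagataWeight_iff, and_assoc]
  simp

end Spaces

section BoxNagata

variable {R κ : Type*} [CommSemiring R] [Fintype κ] [DecidableEq κ] {r : ℕ} {u : κ → ℕ}
  {S : Set (κ → R)}

theorem homogenize_mem_nagataInvariants {p : MvPolynomial κ R} (hp : p ∈ boxInvariants r u S) :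
    homogenize u p ∈ nagataInvariants r u S := by
  obtain ⟨hhom, hbox, hinv⟩ := mem_boxInvariants.mp hp
  have hpair : (homogenize u p).IsWeightedHomogeneous pairWeight u :=
    isWeightedHomogeneous_homogenize fun b hb => by
      ext k
      have := hbox b hb k
      simp only [weight_pairWeight_apply, Finsupp.coe_sumElim, Finsupp.coe_tsub,
        Finsupp.coe_equivFunOnFinite_symm, Sum.elim_inl, Sum.elim_inr, Pi.sub_apply]
      omega
  refine mem_nagataInvariants.mpr
    ⟨isWeightedHomogeneous_homogenize fun b hb => ?_, hpair, fun c hc => ?_⟩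
  · rw [weight_elim_zero_one, ← hhom (mem_support_iff.mp hb)]
    simp [Finsupp.weight_eq_sum]
  · calc nagata c (homogenize u p)
        = homogenize u (dehomogenize (nagata c (homogenize u p))) :=
          (homogenize_dehomogenize (hpair.nagata c)).symm
      _ = homogenize u (translate c p) := by
          rw [← AlgHom.comp_apply, dehomogenize_comp_nagata, AlgHom.comp_apply,
            dehomogenize_homogenize]
      _ = homogenize u p := by rw [hinv c hc]

theorem dehomogenize_mem_boxInvariants {F : MvPolynomial (κ ⊕ κ) R}
    (hF : F ∈ nagataInvariants r u S) : dehomogenize F ∈ boxInvariants r u S := by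
  obtain ⟨hdeg, hpair, hinv⟩ := mem_nagataInvariants.mp hF
  refine mem_boxInvariants.mpr ⟨hdeg.isHomogeneous_dehomogenize,
    le_of_mem_support_dehomogenize hpair, fun c hc => ?_⟩
  rw [← AlgHom.comp_apply, ← dehomogenize_comp_nagata, AlgHom.comp_apply, hinv c hc]

variable (r u S) in
noncomputable def boxInvariantsEquivNagataInvariants :
    boxInvariants r u S ≃ₗ[R] nagataInvariants r u S :=
  LinearEquiv.ofInvOn (homogenize u) dehomogenize.toLinearMap
    (fun _ => homogenize_mem_nagataInvariants) (fun _ => dehomogenize_mem_boxInvariants)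
    ⟨fun p _ => dehomogenize_homogenize u p,
      fun _ hF => homogenize_dehomogenize (mem_nagataInvariants.mp hF).2.1⟩

end BoxNagata

section PdeBox

variable {R ι κ : Type*} [CommRing R] [IsDomain R] [CharZero R] [Fintype ι] [Fintype κ]
  {A : Matrix ι κ R} {r : ℕ} {u : κ → ℕ} {S : Set (κ → R)}

theorem linearSubst_mem_boxInvariants (hS : ∀ c ∈ S, A *ᵥ c = 0) {f : MvPolynomial ι R}
    (hf : f ∈ pdeSolutions A r u) : linearSubst A f ∈ boxInvariants r u S := by
  obtain ⟨hhom, hsol⟩ := mem_pdeSolutions.mp hf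
  refine mem_boxInvariants.mpr ⟨hhom.linearSubst A, fun b hb j => ?_, fun c hc =>
    AlgHom.congr_fun (translate_comp_linearSubst A (hS c hc)) f⟩
  have := (pderiv_pow_apply_eq_zero_iff j (u j + 1) _).mp
    (by rw [← linearSubst_directionalDeriv_pow, hsol j, map_zero]) b hb
  omega

variable [DecidableEq ι] {B : Matrix κ ι R}

theorem linearSubst_linearSubst_of_mem_boxInvariants (hAB : A * B = 1)
    (hS : ∀ c, A *ᵥ c = 0 → c ∈ S) {q : MvPolynomial κ R} (hq : q ∈ boxInvariants r u S) :
    linearSubst A (linearSubst B q) = q :=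
  linearSubst_linearSubst_of_forall_translate hAB fun c hc =>
    (mem_boxInvariants.mp hq).2.2 c (hS c hc)

theorem linearSubst_mem_pdeSolutions (hAB : A * B = 1) (hS : ∀ c, A *ᵥ c = 0 → c ∈ S)
    {q : MvPolynomial κ R} (hq : q ∈ boxInvariants r u S) :
    linearSubst B q ∈ pdeSolutions A r u := by
  obtain ⟨hhom, hbox, -⟩ := mem_boxInvariants.mp hq
  refine mem_pdeSolutions.mpr ⟨hhom.linearSubst B, fun j => ?_⟩
  apply Function.LeftInverse.injective (linearSubst_linearSubst hAB)
  rw [linearSubst_directionalDeriv_pow, linearSubst_linearSubst_of_mem_boxInvariants hAB hS hq,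
    map_zero, pderiv_pow_apply_eq_zero_iff]
  exact fun b hb => Nat.lt_succ_of_le (hbox b hb j)

variable (r u) in
noncomputable def pdeSolutionsEquivBoxInvariants (hAB : A * B = 1)
    (hS : ∀ c, c ∈ S ↔ A *ᵥ c = 0) : pdeSolutions A r u ≃ₗ[R] boxInvariants r u S :=
  LinearEquiv.ofInvOn (linearSubst A).toLinearMap (linearSubst B).toLinearMap
    (fun _ => linearSubst_mem_boxInvariants fun c => (hS c).mp)
    (fun _ => linearSubst_mem_pdeSolutions hAB fun c => (hS c).mpr)
    ⟨fun f _ => linearSubst_linearSubst hAB f,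
      fun _ hq => linearSubst_linearSubst_of_mem_boxInvariants hAB (fun c => (hS c).mpr) hq⟩

end PdeBox

end MvPolynomial

/-- The `(r,u)`-graded component of the invariant ring of the Nagata action of
`G = {λ : Σ λᵢ ℓᵢ = 0}` on `K[x₁,…,x_n,y₁,…,y_n]` is isomorphic as a `K`-vector space to the
space of degree-`r` homogeneous polynomials annihilated by each `ℓᵢ^{uᵢ+1}` acting as a
constant-coefficient differential operator. -/
theorem stmt2 (K : Type*) [Field K] [CharZero K] (d n : ℕ)
    (A : Matrix (Fin d) (Fin n) K)
    (hspan : Submodule.span K (Set.range fun j => (fun i => A i j)) = (⊤ : Submodule K (Fin d → K)))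
    (r : ℕ) (u : Fin n → ℕ)
    -- the differential operators ℓⱼ = Σᵢ a_{ij} ∂ᵢ
    (D : Fin n → Module.End K (MvPolynomial (Fin d) K))
    (hD : ∀ j, D j = ∑ i : Fin d, A i j • (MvPolynomial.pderiv i).toLinearMap)
    -- the Nagata action of λ ∈ K^n : xᵢ ↦ xᵢ, yᵢ ↦ yᵢ + λᵢ xᵢ
    (φ : (Fin n → K) → (MvPolynomial (Fin n ⊕ Fin n) K →ₐ[K] MvPolynomial (Fin n ⊕ Fin n) K))
    (hφ : ∀ lam, φ lam = MvPolynomial.aeval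
      (Sum.elim (fun i => MvPolynomial.X (Sum.inl i))
        (fun i => MvPolynomial.X (Sum.inr i) + MvPolynomial.C (lam i) * MvPolynomial.X (Sum.inl i))))
    -- the ℤ^{n+1}-grading: deg xᵢ = eᵢ, deg yᵢ = e₀ + eᵢ
    (wt : Fin n ⊕ Fin n → ℕ × (Fin n → ℕ))
    (hwt : wt = Sum.elim (fun i => ((0 : ℕ), Pi.single i 1)) (fun i => ((1 : ℕ), Pi.single i 1))) :
    Nonempty (
      -- degree-r polynomial solutions of the PDE system
      ↥((MvPolynomial.homogeneousSubmodule (Fin d) K r) ⊓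
          ⨅ j : Fin n, LinearMap.ker ((D j) ^ (u j + 1)))
      ≃ₗ[K]
      -- the (r,u)-component of the invariant ring R^G
      ↥((MvPolynomial.weightedHomogeneousSubmodule K wt (r, u)) ⊓
          ⨅ lam : {lam : Fin n → K // ∀ i : Fin d, ∑ j : Fin n, A i j * lam j = 0},
            LinearMap.eqLocus (φ lam.1).toLinearMap LinearMap.id)) := by
  obtain rfl : D = fun j => directionalDeriv fun i => A i j := funext hD
  obtain rfl : φ = nagata := funext hφ
  subst hwt
  obtain ⟨B, hAB⟩ := A.exists_mul_eq_one_of_span_col_eq_top hspan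
  have hG : ∀ c, c ∈ {lam : Fin n → K | ∀ i, ∑ j, A i j * lam j = 0} ↔ A *ᵥ c = 0 := fun c => by
    simp [funext_iff, mulVec, dotProduct]
  exact ⟨(pdeSolutionsEquivBoxInvariants r u hAB hG).trans
    (boxInvariantsEquivNagataInvariants r u _)⟩
end

section
/- With S = K[∂₁,…,∂_d] and points ℓ_j ∈ ℙ^{d−1} with homogeneous prime ideals P_j, the degree-r polynomial solutions of the system I_u = ⟨ℓ₁^{u₁+1},…,ℓ_n^{u_n+1}⟩ (as constant-coefficient PDEs acting on K[z₁,…,z_d]) are exactly the degree-r homogeneous polynomials lying in P₁^{r−u₁} ∩ ⋯ ∩ P_n^{r−u_n}, where P_j^{m} = S for m ≤ 0. -/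
/-!
Fix `j` and a coordinate `i` with `aᵢ ≠ 0`. The linear change of variables sending `X_k` to the
minor `aᵢ X_k − a_k X_i` (`k ≠ i`) and `X_i` to `aᵢ⁻¹ X_i` turns the derivation `ℓ = ∑ a_k ∂_k`
into `∂ᵢ`, and the ideal of the point `a` into the ideal `(X_k : k ≠ i)` of the coordinate point
`eᵢ`. In these coordinates both conditions are read off the monomials of a form of degree `r`:
`∂ᵢ^{u+1}` kills it iff every monomial has `X_i`-degree at most `u` (characteristic zero), and it
lies in `(X_k : k ≠ i)^{r-u}` iff every monomial has degree at least `r - u` in the other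
variables.
-/

open MvPolynomial Finsupp

theorem Derivation.coe_finsetSum {R A M ι : Type*} [CommSemiring R] [CommSemiring A]
    [Algebra R A] [AddCommMonoid M] [Module A M] [Module R M] (s : Finset ι)
    (D : ι → Derivation R A M) : ⇑(∑ i ∈ s, D i) = ∑ i ∈ s, ⇑(D i) :=
  map_sum Derivation.coeFnAddMonoidHom D s

namespace Finsupp

variable {σ : Type*}

theorem exists_degree_eq_support_subset_le_iff {s : Set σ} [DecidablePred (· ∈ s)]
    {m : σ →₀ ℕ} {t : ℕ} :
    (∃ m', (m'.degree = t ∧ ↑m'.support ⊆ s) ∧ m' ≤ m) ↔ t ≤ (m.filter (· ∈ s)).degree := by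
  constructor
  · rintro ⟨m', ⟨rfl, hs⟩, hm⟩
    refine degree_mono fun k => ?_
    by_cases hk : k ∈ s
    · simpa [hk] using hm k
    · simp [hk, notMem_support_iff.mp fun h => hk (hs h)]
  · intro ht
    obtain ⟨m', hm', rfl⟩ := exists_le_degree_eq _ t ht
    refine ⟨m', ⟨rfl, fun k hk => ?_⟩, hm'.trans fun k => ?_⟩
    · by_contra hks
      exact Finsupp.mem_support_iff.mp hk (by simpa [hks] using hm' k)
    · by_cases hk : k ∈ s <;> simp [hk]

theorem degree_filter_mem_compl_singleton_add [DecidableEq σ] (m : σ →₀ ℕ) (i : σ) :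
    (m.filter (· ∈ ({i}ᶜ : Set σ))).degree + m i = m.degree := by
  conv_rhs => rw [← filter_add_filter_not m (· ∈ ({i}ᶜ : Set σ))]
  simp

end Finsupp

namespace MvPolynomial

variable {σ R : Type*} [CommSemiring R]

theorem coeff_pderiv_iterate (i : σ) (s : ℕ) (p : MvPolynomial σ R) (m : σ →₀ ℕ) :
    coeff m ((pderiv i)^[s] p) = coeff (m + single i s) p * (m i + s).descFactorial s := by
  induction s generalizing p with
  | zero => simp
  | succ s ih =>
    rw [Function.iterate_succ_apply, ih, coeff_pderiv, add_assoc, ← single_add, ← add_assoc,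
      Nat.succ_descFactorial_succ]
    simp only [Finsupp.add_apply, single_eq_same]
    push_cast
    ring

theorem pderiv_iterate_eq_zero_iff [NoZeroDivisors R] [CharZero R] {i : σ} {s : ℕ}
    {p : MvPolynomial σ R} : (pderiv i)^[s] p = 0 ↔ ∀ m ∈ p.support, m i < s := by
  refine ⟨fun h m hm => ?_, fun h => ?_⟩
  · by_contra! hs
    obtain ⟨m', rfl⟩ : ∃ m', m = m' + single i s :=
      ⟨m - single i s, (tsub_add_cancel_of_le (single_le_iff.mpr hs)).symm⟩
    have hcoeff := congr_arg (coeff m') h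
    rw [coeff_pderiv_iterate, coeff_zero, mul_eq_zero, Nat.cast_eq_zero,
      Nat.descFactorial_eq_zero_iff_lt] at hcoeff
    exact hcoeff.elim (mem_support_iff.mp hm) (by omega)
  · ext m
    rw [coeff_pderiv_iterate, coeff_zero, notMem_support_iff.mp fun hm => by
      simpa using h _ hm, zero_mul]

theorem span_X_image_pow (s : Set σ) (t : ℕ) :
    Ideal.span (X '' s : Set (MvPolynomial σ R)) ^ t =
      Ideal.span ((monomial · 1) '' {m | m.degree = t ∧ ↑m.support ⊆ s}) := by
  rw [Ideal.span, Submodule.span_pow, image_pow_eq_finsuppProd_image]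
  simp [monomial_eq]

theorem mem_span_X_image_pow_iff {s : Set σ} [DecidablePred (· ∈ s)] {t : ℕ}
    {p : MvPolynomial σ R} :
    p ∈ Ideal.span (X '' s : Set (MvPolynomial σ R)) ^ t ↔
      ∀ m ∈ p.support, t ≤ (m.filter (· ∈ s)).degree := by
  rw [span_X_image_pow, mem_ideal_span_monomial_image]
  exact forall₂_congr fun m _ => exists_degree_eq_support_subset_le_iff

variable [DecidableEq σ]

theorem mem_span_X_compl_singleton_pow_iff {i : σ} {t : ℕ} {p : MvPolynomial σ R} :
    p ∈ Ideal.span (X '' {i}ᶜ : Set (MvPolynomial σ R)) ^ t ↔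
      ∀ m ∈ p.support, t + m i ≤ m.degree := by
  rw [mem_span_X_image_pow_iff]
  refine forall₂_congr fun m _ => ?_
  rw [← degree_filter_mem_compl_singleton_add m i]
  omega

theorem IsHomogeneous.pderiv_iterate_eq_zero_iff_mem_span_X_compl_pow [NoZeroDivisors R]
    [CharZero R] {p : MvPolynomial σ R} {r : ℕ} (hp : p.IsHomogeneous r) (i : σ) (u : ℕ) :
    (pderiv i)^[u + 1] p = 0 ↔ p ∈ Ideal.span (X '' {i}ᶜ : Set (MvPolynomial σ R)) ^ (r - u) := by
  rw [pderiv_iterate_eq_zero_iff, mem_span_X_compl_singleton_pow_iff]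
  refine forall₂_congr fun m hm => ?_
  have hdeg : m.degree = r := by rw [degree_eq_weight_one]; exact hp (mem_support_iff.mp hm)
  have := m.le_degree i
  omega

theorem aeval_semiconj_pderiv (D : Derivation R (MvPolynomial σ R) (MvPolynomial σ R))
    {φ : σ → MvPolynomial σ R} {i : σ}
    (h : ∀ k, D (φ k) = Pi.single (M := fun _ => MvPolynomial σ R) i 1 k) :
    Function.Semiconj (aeval (R := R) φ) (pderiv i) D := by
  intro p
  induction p using MvPolynomial.induction_on with
  | C c => simp
  | add p q hp hq => simp only [map_add, hp, hq]
  | mul_X p k hp =>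
    rw [pderiv_mul, pderiv_X, map_mul (aeval φ) p, aeval_X, D.leibniz, ← hp, h, map_add,
      map_mul, map_mul, aeval_X, Pi.single_apply]
    split_ifs <;> simp [mul_comm, add_comm]

section PointIdeal

variable {K : Type*} [Field K]

noncomputable def pointIdeal (a : σ → K) : Ideal (MvPolynomial σ K) :=
  Ideal.span {f | ∃ i i', f = C (a i') * X i - C (a i) * X i'}

theorem pointIdeal_eq_span_minors_at {a : σ → K} {i : σ} (ha : a i ≠ 0) :
    pointIdeal a = Ideal.span ((fun k => C (a i) * X k - C (a k) * X i) '' {i}ᶜ) := by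
  have hC : (C (a i)⁻¹ * C (a i) : MvPolynomial σ K) = 1 := by
    rw [← C_mul, inv_mul_cancel₀ ha, C_1]
  set Q := Ideal.span ((fun k => C (a i) * X k - C (a k) * X i) '' {i}ᶜ)
  have hQ : ∀ k, C (a i) * X k - C (a k) * X i ∈ Q := fun k => by
    by_cases hk : k = i
    · simp [hk]
    · exact Ideal.subset_span ⟨k, hk, rfl⟩
  apply le_antisymm
  · rw [pointIdeal, Ideal.span_le]
    rintro _ ⟨k, k', rfl⟩
    have hminor : C (a k') * X k - C (a k) * X k' =
        C (a i)⁻¹ * (C (a k') * (C (a i) * X k - C (a k) * X i) -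
          C (a k) * (C (a i) * X k' - C (a k') * X i)) := by
      linear_combination (C (a k) * X k' - C (a k') * X k) * hC
    rw [hminor]
    exact Q.mul_mem_left _ (Q.sub_mem (Q.mul_mem_left _ (hQ k)) (Q.mul_mem_left _ (hQ k')))
  · rw [Ideal.span_le]
    rintro _ ⟨k, -, rfl⟩
    exact Ideal.subset_span ⟨k, i, rfl⟩

noncomputable def adaptedCoords (a : σ → K) (i k : σ) : MvPolynomial σ K :=
  if k = i then C (a i)⁻¹ * X i else C (a i) * X k - C (a k) * X i

noncomputable def adaptedCoordsInv (a : σ → K) (i k : σ) : MvPolynomial σ K :=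
  if k = i then C (a i) * X i else C (a i)⁻¹ * X k + C (a k) * X i

theorem aeval_adaptedCoords_adaptedCoordsInv {a : σ → K} {i : σ} (ha : a i ≠ 0) (k : σ) :
    aeval (adaptedCoords a i) (adaptedCoordsInv a i k) = X k := by
  have hC : (C (a i)⁻¹ * C (a i) : MvPolynomial σ K) = 1 := by
    rw [← C_mul, inv_mul_cancel₀ ha, C_1]
  by_cases hk : k = i
  · subst hk
    simp only [adaptedCoordsInv, adaptedCoords, if_true, map_mul, aeval_C, aeval_X, algebraMap_eq]
    linear_combination X k * hC
  · simp only [adaptedCoordsInv, adaptedCoords, hk, if_true, if_false, map_add, map_mul, aeval_C,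
      aeval_X, algebraMap_eq]
    linear_combination X k * hC

theorem aeval_adaptedCoordsInv_adaptedCoords {a : σ → K} {i : σ} (ha : a i ≠ 0) (k : σ) :
    aeval (adaptedCoordsInv a i) (adaptedCoords a i k) = X k := by
  have hC : (C (a i)⁻¹ * C (a i) : MvPolynomial σ K) = 1 := by
    rw [← C_mul, inv_mul_cancel₀ ha, C_1]
  by_cases hk : k = i
  · subst hk
    simp only [adaptedCoordsInv, adaptedCoords, if_true, map_mul, aeval_C, aeval_X, algebraMap_eq]
    linear_combination X k * hC
  · simp only [adaptedCoordsInv, adaptedCoords, hk, if_true, if_false, map_sub, map_mul, aeval_C,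
      aeval_X, algebraMap_eq]
    linear_combination X k * hC

noncomputable def adaptedEquiv {a : σ → K} {i : σ} (ha : a i ≠ 0) :
    MvPolynomial σ K ≃ₐ[K] MvPolynomial σ K :=
  AlgEquiv.ofAlgHom (aeval (adaptedCoords a i)) (aeval (adaptedCoordsInv a i))
    (algHom_ext fun k => by simpa using aeval_adaptedCoords_adaptedCoordsInv ha k)
    (algHom_ext fun k => by simpa using aeval_adaptedCoordsInv_adaptedCoords ha k)

theorem adaptedEquiv_apply {a : σ → K} {i : σ} (ha : a i ≠ 0) (f : MvPolynomial σ K) :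
    adaptedEquiv ha f = aeval (adaptedCoords a i) f := rfl

theorem adaptedEquiv_symm_apply {a : σ → K} {i : σ} (ha : a i ≠ 0) (f : MvPolynomial σ K) :
    (adaptedEquiv ha).symm f = aeval (adaptedCoordsInv a i) f := rfl

theorem IsHomogeneous.adaptedEquiv_symm {a : σ → K} {i : σ} (ha : a i ≠ 0)
    {f : MvPolynomial σ K} {r : ℕ} (hf : f.IsHomogeneous r) :
    ((adaptedEquiv ha).symm f).IsHomogeneous r := by
  rw [adaptedEquiv_symm_apply, ← one_mul r]
  refine hf.aeval (adaptedCoordsInv a i) fun k => ?_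
  unfold adaptedCoordsInv
  split_ifs
  · exact isHomogeneous_C_mul_X _ _
  · exact (isHomogeneous_C_mul_X _ _).add (isHomogeneous_C_mul_X _ _)

theorem map_adaptedEquiv_span_X_compl {a : σ → K} {i : σ} (ha : a i ≠ 0) :
    Ideal.map (adaptedEquiv ha) (Ideal.span (X '' {i}ᶜ)) = pointIdeal a := by
  rw [Ideal.map_span, Set.image_image, pointIdeal_eq_span_minors_at ha]
  congr 1
  refine Set.image_congr fun k hk => ?_
  simp [adaptedEquiv_apply, adaptedCoords, Set.mem_compl_singleton_iff.mp hk]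

theorem adaptedEquiv_semiconj_pderiv (D : Derivation K (MvPolynomial σ K) (MvPolynomial σ K))
    {a : σ → K} (hD : ∀ k, D (X k) = C (a k)) {i : σ} (ha : a i ≠ 0) :
    Function.Semiconj (adaptedEquiv ha) (pderiv i) D := by
  refine aeval_semiconj_pderiv D fun k => ?_
  rw [adaptedCoords, Pi.single_apply]
  split_ifs with hk
  · rw [D.leibniz, hD, derivation_C, smul_zero, add_zero, smul_eq_mul, ← C_mul,
      inv_mul_cancel₀ ha, C_1]
  · rw [map_sub, D.leibniz, D.leibniz, hD, hD, derivation_C, derivation_C]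
    simp only [smul_eq_mul]
    ring

theorem iterate_eq_zero_iff_mem_pointIdeal_pow [CharZero K]
    (D : Derivation K (MvPolynomial σ K) (MvPolynomial σ K)) {a : σ → K}
    (hD : ∀ k, D (X k) = C (a k)) {i : σ} (ha : a i ≠ 0) {f : MvPolynomial σ K} {r : ℕ}
    (hf : f.IsHomogeneous r) (u : ℕ) :
    D^[u + 1] f = 0 ↔ f ∈ pointIdeal a ^ (r - u) := by
  set e := adaptedEquiv ha
  obtain ⟨g, hg, rfl⟩ : ∃ g, g.IsHomogeneous r ∧ e g = f :=
    ⟨e.symm f, hf.adaptedEquiv_symm ha, e.apply_symm_apply f⟩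
  rw [← (adaptedEquiv_semiconj_pderiv D hD ha).iterate_right (u + 1) g,
    map_eq_zero_iff e e.injective, ← map_adaptedEquiv_span_X_compl ha, ← Ideal.map_pow,
    hg.pderiv_iterate_eq_zero_iff_mem_span_X_compl_pow]
  exact (Ideal.apply_mem_of_equiv_iff (f := e.toRingEquiv)).symm

end PointIdeal

end MvPolynomial

open MvPolynomial in
/-- Apolarity (Ensalem–Iarrobino): the degree-`r` polynomial solutions of the PDE
system `⟨ℓ₁^{u₁+1},…,ℓ_n^{u_n+1}⟩` are exactly the degree-`r` forms lying in
`P₁^{r−u₁} ∩ ⋯ ∩ P_n^{r−u_n}`, with the convention `P^m = S` for `m ≤ 0` (here realized by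
truncated subtraction on the exponent). -/
theorem stmt3 (K : Type*) [Field K] [CharZero K] (d n : ℕ)
    (A : Matrix (Fin d) (Fin n) K)
    (hnz : ∀ j, ∃ i, A i j ≠ 0)
    (r : ℕ) (u : Fin n → ℕ)
    -- differential operators ℓⱼ = Σᵢ a_{ij} ∂ᵢ
    (D : Fin n → Module.End K (MvPolynomial (Fin d) K))
    (hD : ∀ j, D j = ∑ i : Fin d, A i j • (MvPolynomial.pderiv i).toLinearMap)
    -- Pⱼ : the homogeneous prime ideal of the point (a_{1j} : … : a_{dj}) ∈ ℙ^{d-1},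
    -- generated by the 2×2 minors a_{i'j} z_i − a_{ij} z_{i'}
    (P : Fin n → Ideal (MvPolynomial (Fin d) K))
    (hP : ∀ j, P j = Ideal.span
      {f | ∃ i i' : Fin d,
        f = MvPolynomial.C (A i' j) * MvPolynomial.X i - MvPolynomial.C (A i j) * MvPolynomial.X i'})
    (f : MvPolynomial (Fin d) K)
    (hf : f ∈ MvPolynomial.homogeneousSubmodule (Fin d) K r) :
    (∀ j, ((D j) ^ (u j + 1)) f = 0) ↔ (∀ j, f ∈ (P j) ^ (r - u j)) := by
  refine forall_congr' fun j => ?_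
  obtain ⟨i, hi⟩ := hnz j
  set ℓ : Derivation K (MvPolynomial (Fin d) K) (MvPolynomial (Fin d) K) :=
    ∑ i, A i j • pderiv i
  have hℓ : ∀ k, ℓ (X k) = C (A k j) := fun k => by
    simp [ℓ, Derivation.coe_finsetSum, pderiv_X, Pi.single_apply, smul_eq_C_mul]
  have hDℓ : ⇑(D j ^ (u j + 1)) = ℓ^[u j + 1] := by
    rw [Module.End.coe_pow, hD j]
    congr 1
    ext p
    simp [ℓ, Derivation.coe_finsetSum]
  rw [hDℓ, hP j]
  exact iterate_eq_zero_iff_mem_pointIdeal_pow ℓ hℓ hi ((mem_homogeneousSubmodule _ _).mp hf) _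
end

section
/- The algebra ℚ[x₁, x₁x₂, x₁x₂x₃] ⊂ ℚ[x₁,x₂,x₃] is the initial algebra of K[e₁,e₂,e₃] where K = ℚ(t), e₁ = x₁+t x₂+t² x₃, e₂ = x₁x₂+t x₁x₃+t² x₂x₃, e₃ = x₁x₂x₃; equivalently, every initial form of a polynomial in K[e₁,e₂,e₃] is a monomial in x₁, x₁x₂, x₁x₂x₃. -/
open MvPolynomial

/-- The order of a nonzero rational function at `t = 0`. -/
noncomputable def ordRF (c : RatFunc ℚ) : ℤ := ((c : LaurentSeries ℚ)).order

/-- The coefficient of the lowest power of `t` in a rational function. -/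
noncomputable def leadRF (c : RatFunc ℚ) : ℚ := ((c : LaurentSeries ℚ)).coeff (ordRF c)

/-- The initial form `in(f)` of `f ∈ ℚ(t)[x]`: the coefficient of the lowest power of `t`. -/
noncomputable def initialForm {σ : Type*} (f : MvPolynomial σ (RatFunc ℚ)) :
    MvPolynomial σ ℚ :=
  ∑ m ∈ f.support,
    if (ordRF (f.coeff m) : WithTop ℤ)
        = (f.support.image fun m' => ordRF (f.coeff m')).min
    then MvPolynomial.monomial m (leadRF (f.coeff m)) else 0

/-!
Let `R ⊆ ℚ(t)` be the local ring at `t = 0` and `R → ℚ` reduction mod `t`. For a polynomial `F`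
over `R` whose reduction is nonzero, the coefficients of minimal `t`-order are exactly those not
divisible by `t`, so `in(F)` is the reduction of `F`. Given `f = P(e₁, e₂, e₃) ≠ 0`, divide `P` by
a coefficient of minimal order: this does not change `in(f)` up to a nonzero rational factor, and
makes `P` a polynomial over `R` with nonzero reduction `P̄`. The `eᵢ` are polynomials over `R`
reducing to `x₁, x₁x₂, x₁x₂x₃`, so `f` reduces to `P̄(x₁, x₁x₂, x₁x₂x₃)`, which is nonzero because
these monomials have linearly independent exponent vectors. Hence `in(f)` lies in
`ℚ[x₁, x₁x₂, x₁x₂x₃]`, and conversely `in(eᵢ)` are its generators.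
-/

section RegularAtZero

open HahnSeries
open scoped RatFunc

variable (K : Type*) [Field K]

noncomputable def regularAtZero : Subring (RatFunc K) :=
  (ofPowerSeries ℤ K).range.comap (algebraMap (RatFunc K) (LaurentSeries K))

variable {K}

noncomputable def evalAtZero : regularAtZero K →+* K where
  toFun c := ((c : RatFunc K) : LaurentSeries K).coeff 0
  map_one' := by simp
  map_mul' a b := by
    obtain ⟨p, hp⟩ := a.2
    obtain ⟨q, hq⟩ := b.2
    simp only [Subring.coe_mul, map_mul, ← hp, ← hq]
    simp [← map_mul, PowerSeries.coeff_coe]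
  map_zero' := by simp
  map_add' := by simp

lemma evalAtZero_apply (c : regularAtZero K) :
    evalAtZero c = ((c : RatFunc K) : LaurentSeries K).coeff 0 := rfl

lemma mem_regularAtZero_iff {c : RatFunc K} :
    c ∈ regularAtZero K ↔ 0 ≤ (c : LaurentSeries K).order := by
  constructor
  · rintro ⟨p, hp⟩
    rcases eq_or_ne (c : LaurentSeries K) 0 with hc | hc
    · simp [hc]
    by_contra! hneg
    have hcoeff := PowerSeries.coeff_coe p (c : LaurentSeries K).order
    rw [hp, if_pos hneg] at hcoeff
    exact coeff_order_eq_zero.not.2 hc hcoeff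
  · intro h
    lift (c : LaurentSeries K).order to ℕ using h with n hn
    exact ⟨_, LaurentSeries.X_order_mul_powerSeriesPart hn⟩

lemma X_mem_regularAtZero : RatFunc.X ∈ regularAtZero K :=
  ⟨PowerSeries.X, by rw [RatFunc.coe_X, ofPowerSeries_X]⟩

lemma evalAtZero_X : evalAtZero ⟨RatFunc.X, X_mem_regularAtZero⟩ = (0 : K) := by
  simp [evalAtZero_apply]

end RegularAtZero

section OrderAtZero

open HahnSeries
open scoped RatFunc

lemma ordRF_one : ordRF 1 = 0 := by simp [ordRF]

lemma leadRF_zero : leadRF 0 = 0 := by simp [leadRF]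

lemma ordRF_mul {a b : RatFunc ℚ} (ha : a ≠ 0) (hb : b ≠ 0) :
    ordRF (a * b) = ordRF a + ordRF b := by
  simp only [ordRF, map_mul]
  exact order_mul ((map_ne_zero _).2 ha) ((map_ne_zero _).2 hb)

lemma ordRF_inv {c : RatFunc ℚ} (hc : c ≠ 0) : ordRF c⁻¹ = -ordRF c := by
  have h := ordRF_mul hc (inv_ne_zero hc)
  rw [mul_inv_cancel₀ hc, ordRF_one] at h
  omega

lemma leadRF_eq_leadingCoeff (c : RatFunc ℚ) : leadRF c = (c : LaurentSeries ℚ).leadingCoeff :=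
  leadingCoeff_eq.symm

lemma leadRF_mul (a b : RatFunc ℚ) : leadRF (a * b) = leadRF a * leadRF b := by
  simp only [leadRF_eq_leadingCoeff, map_mul, leadingCoeff_mul]

lemma leadRF_ne_zero {c : RatFunc ℚ} (hc : c ≠ 0) : leadRF c ≠ 0 := by
  rw [leadRF_eq_leadingCoeff, leadingCoeff_ne_zero, map_ne_zero]
  exact hc

lemma mem_regularAtZero_iff_ordRF_nonneg {c : RatFunc ℚ} :
    c ∈ regularAtZero ℚ ↔ 0 ≤ ordRF c :=
  mem_regularAtZero_iff

lemma evalAtZero_eq_ite (c : regularAtZero ℚ) :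
    evalAtZero c = if ordRF c = 0 then leadRF c else 0 := by
  rw [evalAtZero_apply]
  split_ifs with h
  · rw [leadRF, h]
  · exact coeff_eq_zero_of_lt_order (lt_of_le_of_ne (mem_regularAtZero_iff_ordRF_nonneg.1 c.2) (Ne.symm h))

end OrderAtZero

section InitialForm

variable {σ : Type*}

@[simp]
lemma initialForm_zero : initialForm (0 : MvPolynomial σ (RatFunc ℚ)) = 0 := by
  simp [initialForm]

lemma initialForm_eq_sum {f : MvPolynomial σ (RatFunc ℚ)} {b : ℤ}
    (hle : ∀ m ∈ f.support, b ≤ ordRF (f.coeff m)) (hb : ∃ m ∈ f.support, ordRF (f.coeff m) = b) :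
    initialForm f =
      ∑ m ∈ f.support, if ordRF (f.coeff m) = b then monomial m (leadRF (f.coeff m)) else 0 := by
  have hmin : (f.support.image fun m => ordRF (f.coeff m)).min = b := by
    obtain ⟨m, hm, rfl⟩ := hb
    refine le_antisymm (Finset.min_le (Finset.mem_image_of_mem _ hm)) (Finset.le_min ?_)
    simp only [Finset.mem_image]
    rintro _ ⟨m', hm', rfl⟩
    exact WithTop.coe_le_coe.2 (hle m' hm')
  simp only [initialForm, hmin, WithTop.coe_inj]

lemma initialForm_smul (c : RatFunc ℚ) (f : MvPolynomial σ (RatFunc ℚ)) :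
    initialForm (c • f) = leadRF c • initialForm f := by
  rcases eq_or_ne c 0 with rfl | hc
  · simp [leadRF_zero]
  rcases eq_or_ne f 0 with rfl | hf
  · simp
  obtain ⟨m₀, hm₀, hmin⟩ :=
    f.support.exists_min_image (fun m => ordRF (f.coeff m)) (support_nonempty.2 hf)
  have hsupp : (c • f).support = f.support := support_smul_eq hc f
  have hord : ∀ m ∈ f.support, ordRF ((c • f).coeff m) = ordRF c + ordRF (f.coeff m) :=
    fun m hm => by rw [coeff_smul, smul_eq_mul, ordRF_mul hc (mem_support_iff.1 hm)]
  rw [initialForm_eq_sum (b := ordRF (f.coeff m₀)) hmin ⟨m₀, hm₀, rfl⟩,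
    initialForm_eq_sum (f := c • f) (b := ordRF c + ordRF (f.coeff m₀))
      (fun m hm => by
        rw [hsupp] at hm
        rw [hord m hm]
        exact (add_le_add_iff_left _).2 (hmin m hm)) ⟨m₀, hsupp ▸ hm₀, hord m₀ hm₀⟩,
    hsupp, Finset.smul_sum]
  refine Finset.sum_congr rfl fun m hm => ?_
  simp only [hord m hm, add_right_inj]
  rw [coeff_smul, smul_eq_mul, leadRF_mul]
  split_ifs <;> simp [smul_monomial]

lemma initialForm_map_subtype {F : MvPolynomial σ (regularAtZero ℚ)}
    (hF : F.map evalAtZero ≠ 0) :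
    initialForm (F.map (regularAtZero ℚ).subtype) = F.map evalAtZero := by
  obtain ⟨m₀, hm₀⟩ : ∃ m, evalAtZero (F.coeff m) ≠ 0 := by
    contrapose! hF
    ext m
    simp [coeff_map, hF]
  have hsupp : (F.map (regularAtZero ℚ).subtype).support = F.support :=
    support_map_of_injective F Subtype.val_injective
  rw [initialForm_eq_sum (b := 0)]
  · conv_rhs => rw [F.as_sum, map_sum]
    rw [hsupp]
    refine Finset.sum_congr rfl fun m _ => ?_
    rw [map_monomial, evalAtZero_eq_ite, coeff_map, Subring.coe_subtype]
    split_ifs <;> simp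
  · intro m _
    rw [coeff_map]
    exact mem_regularAtZero_iff_ordRF_nonneg.1 (F.coeff m).2
  · refine ⟨m₀, hsupp ▸ mem_support_iff.2 fun h => hm₀ (by rw [h, map_zero]), ?_⟩
    rw [coeff_map]
    by_contra h
    exact hm₀ ((evalAtZero_eq_ite _).trans (if_neg h))

end InitialForm

section Reduction

variable {σ : Type*}

lemma exists_smul_eq_map_subtype {P : MvPolynomial σ (RatFunc ℚ)} (hP : P ≠ 0) :
    ∃ c : RatFunc ℚ, c ≠ 0 ∧ ∃ Q : MvPolynomial σ (regularAtZero ℚ),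
      Q.map (regularAtZero ℚ).subtype = c • P ∧ Q.map evalAtZero ≠ 0 := by
  obtain ⟨m₀, hm₀, hmin⟩ :=
    P.support.exists_min_image (fun m => ordRF (P.coeff m)) (support_nonempty.2 hP)
  have hm₀ : P.coeff m₀ ≠ 0 := mem_support_iff.1 hm₀
  set c := (P.coeff m₀)⁻¹
  have hcoeffs : ∀ m, c * P.coeff m ∈ regularAtZero ℚ := by
    intro m
    rcases eq_or_ne (P.coeff m) 0 with hm | hm
    · rw [hm, mul_zero]
      exact zero_mem _
    rw [mem_regularAtZero_iff_ordRF_nonneg, ordRF_mul (inv_ne_zero hm₀) hm, ordRF_inv hm₀]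
    linarith [hmin m (mem_support_iff.2 hm)]
  obtain ⟨Q, hQ⟩ : c • P ∈ Set.range (map (regularAtZero ℚ).subtype) := by
    rw [mem_range_map_iff_coeffs_subset, Subring.coe_subtype, Subtype.range_coe]
    intro x hx
    obtain ⟨m, -, rfl⟩ := mem_coeffs_iff.1 hx
    exact hcoeffs m
  refine ⟨c, inv_ne_zero hm₀, Q, hQ, fun h => ?_⟩
  have hQm₀ : Q.coeff m₀ = 1 := by
    apply Subtype.val_injective
    simpa [c, hm₀, coeff_map] using congr_arg (coeff m₀) hQ
  simpa [hQm₀, coeff_map] using congr_arg (coeff m₀) h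

lemma map_aeval_eq_aeval_map {R S : Type*} [CommRing R] [CommRing S] (g : R →+* S) {τ : Type*}
    (w : τ → MvPolynomial σ R) (p : MvPolynomial τ R) :
    (aeval w p).map g = aeval (fun i => (w i).map g) (p.map g) := by
  simp only [aeval_eq_bind₁, map_bind₁]

theorem initialForm_aeval_mem_range {τ : Type*} (E : τ → MvPolynomial σ (regularAtZero ℚ))
    (hE : AlgebraicIndependent ℚ fun i => (E i).map evalAtZero) (P : MvPolynomial τ (RatFunc ℚ)) :
    initialForm (aeval (fun i => (E i).map (regularAtZero ℚ).subtype) P) ∈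
      (aeval (R := ℚ) fun i => (E i).map evalAtZero).range := by
  rcases eq_or_ne P 0 with rfl | hP
  · simp only [map_zero, initialForm_zero]
    exact zero_mem _
  obtain ⟨c, hc, Q, hQ, hQ0⟩ := exists_smul_eq_map_subtype hP
  have hlift : (aeval E Q).map (regularAtZero ℚ).subtype =
      c • aeval (fun i => (E i).map (regularAtZero ℚ).subtype) P := by
    rw [map_aeval_eq_aeval_map, hQ, map_smul]
  have hred : (aeval E Q).map evalAtZero =
      aeval (fun i => (E i).map evalAtZero) (Q.map evalAtZero) :=
    map_aeval_eq_aeval_map _ _ _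
  have key := initialForm_map_subtype (hred ▸ (map_ne_zero_iff _ hE).2 hQ0)
  rw [hlift, initialForm_smul, hred] at key
  rw [(eq_inv_smul_iff₀ (leadRF_ne_zero hc)).2 key]
  exact Subalgebra.smul_mem _ (AlgHom.mem_range_self _ _) _

end Reduction

theorem algebraicIndependent_monomial {R σ τ : Type*} [CommRing R]
    {L : (σ →₀ ℕ) →+ (τ →₀ ℕ)} (hL : Function.Injective L) :
    AlgebraicIndependent R fun i => (monomial (L (Finsupp.single i 1)) 1 : MvPolynomial τ R) := by
  have : aeval (fun i => (monomial (L (Finsupp.single i 1)) 1 : MvPolynomial τ R)) =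
      AddMonoidAlgebra.mapDomainAlgHom R R L := by
    refine MvPolynomial.algHom_ext fun i => ?_
    rw [aeval_X, AddMonoidAlgebra.mapDomainAlgHom_apply, X]
    exact (AddMonoidAlgebra.mapDomain_single ..).symm
  rw [AlgebraicIndependent, this]
  exact AddMonoidAlgebra.mapDomain_injective hL

lemma algebraicIndependent_X_prefix_products :
    AlgebraicIndependent ℚ ![(X 0 : MvPolynomial (Fin 3) ℚ), X 0 * X 1, X 0 * X 1 * X 2] := by
  let d : Fin 3 → Fin 3 →₀ ℕ := ![Finsupp.single 0 1, Finsupp.single 0 1 + Finsupp.single 1 1,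
    Finsupp.single 0 1 + Finsupp.single 1 1 + Finsupp.single 2 1]
  have hL : Function.Injective (Finsupp.linearCombination ℕ d) := by
    intro m m' h
    have h0 := DFunLike.congr_fun h 0
    have h1 := DFunLike.congr_fun h 1
    have h2 := DFunLike.congr_fun h 2
    simp [d, Finsupp.linearCombination_apply, Finsupp.sum_fintype, Fin.sum_univ_three] at h0 h1 h2
    have e₀ : m 0 = m' 0 := by omega
    have e₁ : m 1 = m' 1 := by omega
    have e₂ : m 2 = m' 2 := by omega
    ext i
    fin_cases i <;> assumption
  convert algebraicIndependent_monomial (R := ℚ)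
    (L := (Finsupp.linearCombination ℕ d).toAddMonoidHom) hL using 1
  ext1 i
  fin_cases i <;> simp [d, X, monomial_mul]

lemma Matrix.range_cons_cons_cons_empty {α : Type*} (x y z : α) (u : Fin 0 → α) :
    Set.range (vecCons x (vecCons y (vecCons z u))) = {x, y, z} := by
  rw [range_cons, range_cons_cons_empty, Set.singleton_union]

/-- The initial algebra of `U = K[e₁,e₂,e₃]`, where `K = ℚ(t)`,
`e₁ = x₁+tx₂+t²x₃`, `e₂ = x₁x₂+tx₁x₃+t²x₂x₃`, `e₃ = x₁x₂x₃`, equals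
`ℚ[x₁, x₁x₂, x₁x₂x₃]`. -/
theorem stmt8
    (e₁ e₂ e₃ : MvPolynomial (Fin 3) (RatFunc ℚ))
    (he₁ : e₁ = X 0 + C RatFunc.X * X 1 + C (RatFunc.X ^ 2) * X 2)
    (he₂ : e₂ = X 0 * X 1 + C RatFunc.X * (X 0 * X 2) + C (RatFunc.X ^ 2) * (X 1 * X 2))
    (he₃ : e₃ = X 0 * X 1 * X 2) :
    Algebra.adjoin ℚ
        {g : MvPolynomial (Fin 3) ℚ |
          ∃ f ∈ Algebra.adjoin (RatFunc ℚ) {e₁, e₂, e₃}, f ≠ 0 ∧ g = initialForm f}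
      = Algebra.adjoin ℚ
          ({X 0, X 0 * X 1, X 0 * X 1 * X 2} : Set (MvPolynomial (Fin 3) ℚ)) := by
  let t : regularAtZero ℚ := ⟨RatFunc.X, X_mem_regularAtZero⟩
  have ht : evalAtZero t = 0 := evalAtZero_X
  let E : Fin 3 → MvPolynomial (Fin 3) (regularAtZero ℚ) :=
    ![X 0 + C t * X 1 + C (t ^ 2) * X 2,
      X 0 * X 1 + C t * (X 0 * X 2) + C (t ^ 2) * (X 1 * X 2),
      X 0 * X 1 * X 2]
  have hlift : (fun i => (E i).map (regularAtZero ℚ).subtype) = ![e₁, e₂, e₃] := by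
    ext1 i
    fin_cases i <;> simp [E, t, he₁, he₂, he₃]
  have hred : (fun i => (E i).map evalAtZero) = ![X 0, X 0 * X 1, X 0 * X 1 * X 2] := by
    ext1 i
    fin_cases i <;> simp [E, ht]
  have hindep := hred ▸ algebraicIndependent_X_prefix_products
  rw [← Matrix.range_cons_cons_cons_empty, ← Matrix.range_cons_cons_cons_empty, ← hlift, ← hred]
  refine le_antisymm (Algebra.adjoin_le ?_) (Algebra.adjoin_le ?_)
  · rintro _ ⟨f, hf, -, rfl⟩
    rw [Algebra.adjoin_range_eq_range_aeval] at hf ⊢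
    obtain ⟨P, rfl⟩ := hf
    exact initialForm_aeval_mem_range E hindep P
  · rintro _ ⟨i, rfl⟩
    have hE : (E i).map evalAtZero ≠ 0 := hindep.ne_zero i
    refine Algebra.subset_adjoin
      ⟨_, Algebra.subset_adjoin ⟨i, rfl⟩, fun h => hE ?_, (initialForm_map_subtype hE).symm⟩
    rw [(map_eq_zero_iff _ (map_injective _ Subtype.val_injective)).1 h, map_zero]
end

section
/- Fix n ≥ 3 and a vector u ∈ {0,1,2}^n with i entries 0, j entries 2 and 2k+2 entries 1. In the polynomial ring ℚ[q] with one variable q_σ for each odd-cardinality subset σ of {1,…,n}, graded by deg(q_{i₀…i_{2k}}) = k e₀ + e_{i₀} + ⋯ + e_{i_{2k}} ∈ ℤ^{n+1}, the dimension of the degree (j+k, u) component is exactly 2^{2k}. -/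
/-!
Comparing the total `u`-degree `2j + 2k + 2` of a monomial with its `e₀`-degree `j + k` shows
that it is quadratic, `q_σ q_τ`, with `1_σ + 1_τ = u`: both sets contain the entries `2`, and
they split the `2k + 2` entries `1` between them. Normalising by a fixed entry `s₀` with
`u s₀ = 1` and `s₀ ∈ σ`, these monomials correspond to the subsets `A` of the remaining `2k + 1`
entries `1` with `j + |A|` even, and exactly half of the `2^(2k+1)` subsets have a given parity.
-/

open Finset

theorem MvPolynomial.finrank_weightedHomogeneousSubmodule {R σ M : Type*} [CommRing R]
    [StrongRankCondition R] [AddCommMonoid M] (w : σ → M) (m : M) :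
    Module.finrank R (weightedHomogeneousSubmodule R w m) =
      Nat.card {d : σ →₀ ℕ // Finsupp.weight w d = m} := by
  rw [weightedHomogeneousSubmodule_eq_finsupp_supported,
    (AddMonoidAlgebra.supportedEquivFinsupp _).finrank_eq,
    Module.finrank_eq_nat_card_basis Finsupp.basisSingleOne]
  rfl

theorem Finset.card_powerset_filter_even_add {α : Type*} [DecidableEq α] {s : Finset α}
    (hs : s.Nonempty) (m : ℕ) : #{t ∈ s.powerset | Even (m + #t)} = 2 ^ (#s - 1) := by
  obtain ⟨a, ha⟩ := hs
  rw [← insert_erase ha, card_filter, sum_powerset_insert (notMem_erase a s),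
    card_insert_of_notMem (notMem_erase a s), Nat.add_sub_cancel, ← card_powerset,
    ← sum_add_distrib, card_eq_sum_ones]
  refine sum_congr rfl fun t ht => ?_
  rw [card_insert_of_notMem fun h => notMem_erase a s (mem_powerset.mp ht h), ← add_assoc]
  by_cases h : Even (m + #t) <;> simp [h, Nat.even_add_one]

theorem Finsupp.exists_eq_single_add_single_of_degree_eq_two {σ : Type*} {d : σ →₀ ℕ}
    (h : d.degree = 2) : ∃ a b, d = single a 1 + single b 1 := by
  have hcard : Multiset.card (toMultiset d) = 2 := by
    rw [card_toMultiset]; exact h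
  obtain ⟨a, b, hab⟩ := Multiset.card_eq_two.mp hcard
  refine ⟨a, b, ?_⟩
  classical
  rw [← Finsupp.toMultiset_toFinsupp d, hab, Multiset.insert_eq_cons, ← Multiset.singleton_add,
    Multiset.toFinsupp_add, Multiset.toFinsupp_singleton, Multiset.toFinsupp_singleton]

theorem Finset.sum_eq_two_mul_card_add_card {α : Type*} [Fintype α] {u : α → ℕ}
    (hu : ∀ i, u i ≤ 2) : ∑ i, u i = 2 * #{i | u i = 2} + #{i | u i = 1} := by
  rw [card_filter, card_filter, mul_sum, ← sum_add_distrib]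
  refine sum_congr rfl fun i _ => ?_
  have := hu i
  split_ifs <;> omega

theorem Finsupp.eq_of_single_add_single_eq {ι : Type*} {x y x' y' : ι}
    (h : single x 1 + single y 1 = (single x' 1 + single y' 1 : ι →₀ ℕ)) (hne : x ≠ y') :
    x = x' := by
  rcases (single_add_single_eq_single_add_single one_ne_zero one_ne_zero).mp h with
    ⟨hx, -⟩ | ⟨-, hx, -⟩ | ⟨h_two, -⟩
  · exact hx
  · exact absurd hx hne
  · exact absurd h_two (by decide)

section DisjointUnion

variable {α : Type*} [DecidableEq α] {T S A : Finset α} {s₀ : α}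

theorem odd_card_union_insert_iff (hTS : Disjoint T S) (hs₀T : s₀ ∉ T) (hs₀S : s₀ ∉ S)
    (hA : A ⊆ S) : Odd #(T ∪ insert s₀ A) ↔ Even (#T + #A) := by
  rw [card_union_of_disjoint (disjoint_insert_right.mpr ⟨hs₀T, hTS.mono_right hA⟩),
    card_insert_of_notMem fun h => hs₀S (hA h), ← add_assoc, Nat.odd_add_one,
    Nat.not_odd_iff_even]

theorem odd_card_union_sdiff (hTS : Disjoint T S) (hS : Odd #S) (hA : A ⊆ S)
    (hTA : Even (#T + #A)) : Odd #(T ∪ (S \ A)) := by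
  rw [card_union_of_disjoint (hTS.mono_right sdiff_subset), card_sdiff_of_subset hA]
  have := card_le_card hA
  rw [Nat.odd_iff] at hS ⊢
  rw [Nat.even_iff] at hTA
  omega

theorem union_insert_inter_eq_of_subset (hTS : Disjoint T S) (hs₀S : s₀ ∉ S) (hA : A ⊆ S) :
    (T ∪ insert s₀ A) ∩ S = A := by
  rw [union_inter_distrib_right, disjoint_iff_inter_eq_empty.mp hTS, empty_union,
    insert_inter_of_notMem hs₀S, inter_eq_left.mpr hA]

end DisjointUnion

section OddSubsets

variable {α : Type*} [Fintype α] [DecidableEq α]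

variable (α) in
def oddSubsetWeight (s : {s : Finset α // Odd #s}) : ℕ × (α → ℕ) :=
  ((#s.1 - 1) / 2, fun i => if i ∈ s.1 then 1 else 0)

theorem sum_snd_weight_oddSubsetWeight (d : {s : Finset α // Odd #s} →₀ ℕ) :
    ∑ i, (Finsupp.weight (oddSubsetWeight α) d).2 i =
      2 * (Finsupp.weight (oddSubsetWeight α) d).1 + d.degree := by
  simp only [Finsupp.weight_eq_sum, Finsupp.degree_eq_sum, Prod.snd_sum, Prod.fst_sum,
    Finset.sum_apply, Prod.smul_snd, Prod.smul_fst, Pi.smul_apply, smul_eq_mul, oddSubsetWeight]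
  rw [sum_comm, mul_sum, ← sum_add_distrib]
  refine sum_congr rfl fun s _ => ?_
  obtain ⟨r, hr⟩ := s.2
  rw [← mul_sum, sum_boole, filter_mem_eq_inter, univ_inter, hr]
  simp only [Nat.cast_id, Nat.add_sub_cancel, Nat.mul_div_cancel_left _ two_pos]
  ring

theorem weight_oddSubsetWeight_eq_iff {m : ℕ} {u : α → ℕ} (hsum : ∑ i, u i = 2 * m + 2)
    (d : {s : Finset α // Odd #s} →₀ ℕ) :
    Finsupp.weight (oddSubsetWeight α) d = (m, u) ↔
      ∃ a b, d = Finsupp.single a 1 + Finsupp.single b 1 ∧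
        ∀ i, (if i ∈ a.1 then 1 else 0) + (if i ∈ b.1 then 1 else 0) = u i := by
  have hrel := sum_snd_weight_oddSubsetWeight d
  constructor
  · intro h
    rw [h] at hrel
    dsimp only at hrel
    obtain ⟨a, b, rfl⟩ := Finsupp.exists_eq_single_add_single_of_degree_eq_two (d := d) (by
      omega)
    refine ⟨a, b, rfl, fun i => ?_⟩
    simpa [Finsupp.weight_single, oddSubsetWeight] using congrFun (congrArg Prod.snd h) i
  · rintro ⟨a, b, rfl, hab⟩
    have hsnd :
        (Finsupp.weight (oddSubsetWeight α) (Finsupp.single a 1 + Finsupp.single b 1)).2 = u := by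
      ext i; simpa [Finsupp.weight_single, oddSubsetWeight] using hab i
    have hdeg : (Finsupp.single a 1 + Finsupp.single b 1).degree = 2 := by
      rw [map_add, Finsupp.degree_single, Finsupp.degree_single]
    rw [hsnd, hdeg] at hrel
    exact Prod.ext (by omega) hsnd

theorem ite_mem_add_ite_mem_eq_iff {u : α → ℕ} (hu : ∀ i, u i ≤ 2) {s₀ : α} (hs₀ : u s₀ = 1)
    {a b : Finset α} (ha : s₀ ∈ a) :
    (∀ i, (if i ∈ a then 1 else 0) + (if i ∈ b then 1 else 0) = u i) ↔
      ∃ A ⊆ ({i | u i = 1} : Finset α).erase s₀,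
        a = ({i | u i = 2} : Finset α) ∪ insert s₀ A ∧
          b = ({i | u i = 2} : Finset α) ∪ (({i | u i = 1} : Finset α).erase s₀ \ A) := by
  constructor
  · intro h
    refine ⟨a ∩ ({i | u i = 1} : Finset α).erase s₀, inter_subset_right, ?_, ?_⟩ <;> ext i <;>
      have hi := h i <;> have := hu i <;> by_cases h0 : i = s₀ <;> by_cases hia : i ∈ a <;>
      by_cases hib : i ∈ b <;> simp_all <;> omega
  · rintro ⟨A, hA, rfl, rfl⟩ i
    have hA' : i ∈ A → i ≠ s₀ ∧ u i = 1 := fun h => by simpa using hA h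
    have := hu i
    simp only [mem_union, mem_insert, mem_sdiff, mem_erase, mem_filter, mem_univ, true_and]
    split_ifs <;> grind

theorem exists_eq_single_add_single_of_weight_oddSubsetWeight_eq {m : ℕ} {u : α → ℕ}
    (hu : ∀ i, u i ≤ 2) (hsum : ∑ i, u i = 2 * m + 2) {s₀ : α} (hs₀ : u s₀ = 1)
    {d : {s : Finset α // Odd #s} →₀ ℕ} (hd : Finsupp.weight (oddSubsetWeight α) d = (m, u)) :
    ∃ a b, d = Finsupp.single a 1 + Finsupp.single b 1 ∧
      ∃ A ⊆ ({i | u i = 1} : Finset α).erase s₀,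
        a.1 = ({i | u i = 2} : Finset α) ∪ insert s₀ A ∧
          b.1 = ({i | u i = 2} : Finset α) ∪ (({i | u i = 1} : Finset α).erase s₀ \ A) := by
  obtain ⟨a, b, rfl, hab⟩ := (weight_oddSubsetWeight_eq_iff hsum d).mp hd
  by_cases ha : s₀ ∈ a.1
  · exact ⟨a, b, rfl, (ite_mem_add_ite_mem_eq_iff hu hs₀ ha).mp hab⟩
  · have hb : s₀ ∈ b.1 := by have := hab s₀; simp_all
    exact ⟨b, a, add_comm _ _,
      (ite_mem_add_ite_mem_eq_iff hu hs₀ hb).mp fun i => (add_comm _ _).trans (hab i)⟩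

theorem natCard_weight_oddSubsetWeight_eq {m : ℕ} {u : α → ℕ} (hu : ∀ i, u i ≤ 2)
    (hsum : ∑ i, u i = 2 * m + 2) {s₀ : α} (hs₀ : u s₀ = 1) :
    Nat.card {d : {s : Finset α // Odd #s} →₀ ℕ //
        Finsupp.weight (oddSubsetWeight α) d = (m, u)} =
      #{A ∈ (({i | u i = 1} : Finset α).erase s₀).powerset |
        Even (#({i | u i = 2} : Finset α) + #A)} := by
  set T : Finset α := {i | u i = 2}
  set S : Finset α := ({i | u i = 1} : Finset α).erase s₀
  have hTS : Disjoint T S :=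
    (disjoint_filter.mpr fun i _ h => by omega).mono_right (erase_subset _ _)
  have hs₀T : s₀ ∉ T := by simp [T, hs₀]
  have hs₀S : s₀ ∉ S := notMem_erase _ _
  have hS : Odd #S := by
    have : ∑ i, u i = 2 * #T + #({i | u i = 1} : Finset α) := sum_eq_two_mul_card_add_card hu
    rw [← insert_erase (show s₀ ∈ ({i | u i = 1} : Finset α) by simpa using hs₀),
      card_insert_of_notMem hs₀S] at this
    rw [Nat.odd_iff]; omega
  set P := {A ∈ S.powerset | Even (#T + #A)}
  have hP : ∀ {A}, A ∈ P ↔ A ⊆ S ∧ Even (#T + #A) := by simp [P]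
  have hodd_pos : ∀ {A}, A ∈ P → Odd #(T ∪ insert s₀ A) := fun hA =>
    (odd_card_union_insert_iff hTS hs₀T hs₀S (hP.mp hA).1).mpr (hP.mp hA).2
  have hodd_neg : ∀ {A}, A ∈ P → Odd #(T ∪ (S \ A)) := fun hA =>
    odd_card_union_sdiff hTS hS (hP.mp hA).1 (hP.mp hA).2
  let F : {A // A ∈ P} → {d : {s : Finset α // Odd #s} →₀ ℕ //
      Finsupp.weight (oddSubsetWeight α) d = (m, u)} := fun A =>
    ⟨Finsupp.single ⟨T ∪ insert s₀ A, hodd_pos A.2⟩ 1 +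
      Finsupp.single ⟨T ∪ (S \ A), hodd_neg A.2⟩ 1,
      (weight_oddSubsetWeight_eq_iff hsum _).mpr ⟨_, _, rfl,
        (ite_mem_add_ite_mem_eq_iff hu hs₀ (mem_union_right _ (mem_insert_self _ _))).mpr
          ⟨A, (hP.mp A.2).1, rfl, rfl⟩⟩⟩
  have hF_inj : F.Injective := by
    rintro ⟨A, hA⟩ ⟨A', hA'⟩ h
    have h_pos := Finsupp.eq_of_single_add_single_eq (congrArg Subtype.val h) fun h_eq => by
      simpa [hs₀T, hs₀S] using congrArg (s₀ ∈ ·.1) h_eq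
    have := congrArg (·.1 ∩ S) h_pos
    simp only [union_insert_inter_eq_of_subset hTS hs₀S (hP.mp hA).1,
      union_insert_inter_eq_of_subset hTS hs₀S (hP.mp hA').1] at this
    exact Subtype.ext this
  have hF_surj : F.Surjective := by
    rintro ⟨d, hd⟩
    obtain ⟨⟨a, ha_odd⟩, ⟨b, hb_odd⟩, rfl, A, hAS, rfl, rfl⟩ :=
      exists_eq_single_add_single_of_weight_oddSubsetWeight_eq hu hsum hs₀ hd
    change Odd #(T ∪ insert s₀ A) at ha_odd
    rw [odd_card_union_insert_iff hTS hs₀T hs₀S hAS] at ha_odd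
    exact ⟨⟨A, hP.mpr ⟨hAS, ha_odd⟩⟩, rfl⟩
  rw [← Nat.card_eq_finsetCard]
  exact (Nat.card_eq_of_bijective F ⟨hF_inj, hF_surj⟩).symm

end OddSubsets

theorem stmt11_general (n : ℕ) (u : Fin n → ℕ) (j k : ℕ)
    (hu : ∀ i, u i ≤ 2)
    (h2 : (Finset.univ.filter fun i => u i = 2).card = j)
    (h1 : (Finset.univ.filter fun i => u i = 1).card = 2 * k + 2)
    (wt : {s : Finset (Fin n) // Odd s.card} → ℕ × (Fin n → ℕ))
    (hwt : ∀ s, wt s = ((s.1.card - 1) / 2, fun i => if i ∈ s.1 then 1 else 0)) :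
    Module.finrank ℚ
      ↥(MvPolynomial.weightedHomogeneousSubmodule ℚ wt ((j + k : ℕ), u))
      = 2 ^ (2 * k) := by
  obtain rfl : wt = oddSubsetWeight (Fin n) := funext hwt
  have hsum : ∑ i, u i = 2 * (j + k) + 2 := by
    rw [sum_eq_two_mul_card_add_card hu, h2, h1]; ring
  obtain ⟨s₀, hs₀⟩ : ({i | u i = 1} : Finset (Fin n)).Nonempty := card_pos.mp (by omega)
  have hS : #(({i | u i = 1} : Finset (Fin n)).erase s₀) = 2 * k + 1 := by
    rw [card_erase_of_mem hs₀, h1]; rfl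
  rw [MvPolynomial.finrank_weightedHomogeneousSubmodule,
    natCard_weight_oddSubsetWeight_eq hu hsum (mem_filter.mp hs₀).2, h2,
    card_powerset_filter_even_add (card_pos.mp (by omega)), hS, Nat.add_sub_cancel]

/-- In the polynomial ring `ℚ[q]` with one variable `q_σ` for each odd subset
`σ ⊆ {1,…,n}`, graded by `deg q_σ = ((|σ|-1)/2) e₀ + Σ_{i∈σ} eᵢ`, the component of degree
`(j+k, u)` has dimension `2^{2k}` whenever `u ∈ {0,1,2}^n` has `i₀` entries `0`, `j` entries
`2` and `2k+2` entries `1`. -/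
theorem stmt11 (n : ℕ) (hn : 3 ≤ n) (u : Fin n → ℕ) (i₀ j k : ℕ)
    (hu : ∀ i, u i ≤ 2)
    (h0 : (Finset.univ.filter fun i => u i = 0).card = i₀)
    (h2 : (Finset.univ.filter fun i => u i = 2).card = j)
    (h1 : (Finset.univ.filter fun i => u i = 1).card = 2 * k + 2)
    (wt : {s : Finset (Fin n) // Odd s.card} → ℕ × (Fin n → ℕ))
    (hwt : ∀ s, wt s = ((s.1.card - 1) / 2, fun i => if i ∈ s.1 then 1 else 0)) :
    Module.finrank ℚ
      ↥(MvPolynomial.weightedHomogeneousSubmodule ℚ wt ((j + k : ℕ), u))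
      = 2 ^ (2 * k) :=
  stmt11_general n u j k hu h2 h1 wt hwt
end

section
/- With the initial monomials in(Q_{i₀…i_{2k}}) = x_{i₀} y_{i₁} x_{i₂} y_{i₃} ⋯ y_{i_{2k−1}} x_{i_{2k}} for each odd subset {i₀<⋯<i_{2k}} of {1,…,n}, n = 2k+2, the number of monomials of multidegree (k,1,1,…,1) in the ℚ-algebra generated by these monomials equals 2^k. -/
/-!
Each generator `altMon s` with `#s = 2j + 1` has `x`-degree `j + 1` and `y`-degree `j`, so a
monomial of the algebra whose `x`-degree exceeds its `y`-degree by two is a product of exactly two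
generators. If moreover every index occurs once, it is `altMon s * altMon sᶜ` with `#s`, `#sᶜ` odd.
The variable at index `i` is then a `y` exactly when `i` has an odd position in its own block; as
the positions of `i` in `s` and in `sᶜ` add up to `i`, each pair `{2j+1, 2j+2}` carries exactly one
`y`, and the end indices `0`, `2k+1` carry `x`. Such a monomial is determined by which of `2j+1`
is a `y`, and each of the `2^k` choices occurs: put the pairs of shape `y x` into a block with `0`
and the pairs of shape `x y` into a block with `2k+1`.
-/

open MvPolynomial

/-- The alternating monomial `x_{i₀} y_{i₁} x_{i₂} y_{i₃} ⋯` associated with a finite subset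
`s = {i₀ < i₁ < ⋯}` of indices: elements in even position (in the increasing ordering of `s`)
contribute an `x`-variable and elements in odd position a `y`-variable. -/
noncomputable def altMon (n : ℕ) (s : Finset (Fin n)) :
    MvPolynomial (Fin n ⊕ Fin n) ℚ :=
  (((s.sort (· ≤ ·)).zipIdx.map Prod.swap).map fun p =>
    if p.1 % 2 = 0 then X (Sum.inl p.2) else X (Sum.inr p.2)).prod

open Finset

lemma MvPolynomial.mem_closure_of_monomial_mem_adjoin {σ R : Type*} [CommSemiring R]
    [Nontrivial R] {G : Set (σ →₀ ℕ)} {m : σ →₀ ℕ}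
    (h : monomial m (1 : R) ∈ Algebra.adjoin R ((monomial · (1 : R)) '' G)) :
    m ∈ AddSubmonoid.closure G := by
  suffices ∀ p ∈ Algebra.adjoin R ((monomial · (1 : R)) '' G),
      p ∈ restrictSupport R (AddSubmonoid.closure G : Set (σ →₀ ℕ)) by
    simpa using this _ h
  intro p hp
  induction hp using Algebra.adjoin_induction with
  | mem x hx =>
    obtain ⟨g, hg, rfl⟩ := hx
    simp [AddSubmonoid.subset_closure hg]
  | algebraMap r => simp [algebraMap_eq, ← monomial_zero', zero_mem]
  | add x y _ _ hx hy => exact add_mem hx hy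
  | mul x y _ _ hx hy =>
    refine restrictSupport_mono R ?_ ((restrictSupport_add R _ _).ge (Submodule.mul_mem_mul hx hy))
    exact Set.add_subset_iff.2 fun a ha b hb => add_mem ha hb

lemma AddSubmonoid.exists_add_eq_of_mem_closure {M : Type*} [AddCommMonoid M] {G : Set M}
    (φ ψ : M →+ ℕ) (hG : ∀ g ∈ G, φ g = ψ g + 1) {m : M} (hm : m ∈ closure G)
    (h2 : φ m = ψ m + 2) : ∃ a ∈ G, ∃ b ∈ G, a + b = m := by
  obtain ⟨l, hlG, rfl⟩ := exists_multiset_of_mem_closure hm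
  have hcard : φ l.sum = ψ l.sum + Multiset.card l := by
    rw [map_multiset_sum, map_multiset_sum, Multiset.map_congr rfl fun g hg => hG g (hlG g hg),
      Multiset.sum_map_add]
    simp
  obtain ⟨a, b, rfl⟩ := Multiset.card_eq_two.1 (show Multiset.card l = 2 by omega)
  exact ⟨a, hlG a (by simp), b, hlG b (by simp), by simp⟩

lemma Finset.sort_insert_of_forall_lt {α : Type*} [LinearOrder α] {s : Finset α} {a : α}
    (h : ∀ b ∈ s, b < a) : (insert a s).sort (· ≤ ·) = s.sort (· ≤ ·) ++ [a] := by
  have ha : a ∉ s := fun has => (h a has).false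
  refine List.Perm.eq_of_pairwise' (pairwise_sort _ _) ?_ ?_
  · refine List.pairwise_append.2 ⟨pairwise_sort _ _, List.pairwise_singleton _ a, ?_⟩
    simp only [mem_sort, List.mem_singleton]
    rintro b hb _ rfl
    exact (h b hb).le
  · refine (List.perm_ext_iff_of_nodup (sort_nodup _ _) ?_).2 fun b => by simp [or_comm]
    exact (sort_nodup _ _).append (List.nodup_singleton a) (by simpa using ha)

namespace AltMon

variable {n : ℕ}

def posIn (s : Finset (Fin n)) (p : ℕ) : ℕ := #{i ∈ s | i.val < p}

lemma posIn_zero (s : Finset (Fin n)) : posIn s 0 = 0 := by simp [posIn]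

lemma posIn_of_le (s : Finset (Fin n)) {p : ℕ} (hp : n ≤ p) : posIn s p = #s := by
  rw [posIn, filter_true_of_mem fun i _ => i.isLt.trans_le hp]

lemma posIn_succ (s : Finset (Fin n)) {p : ℕ} (hp : p < n) :
    posIn s (p + 1) = posIn s p + if (⟨p, hp⟩ : Fin n) ∈ s then 1 else 0 := by
  have hsplit : ({i ∈ s | i.val < p + 1} : Finset (Fin n)) =
      {i ∈ s | i.val < p} ∪ {i ∈ s | i = ⟨p, hp⟩} := by
    ext i
    simp [Fin.ext_iff, le_iff_lt_or_eq, and_or_left]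
  have hdisj : Disjoint {i ∈ s | i.val < p} {i ∈ s | i = ⟨p, hp⟩} :=
    disjoint_filter.2 fun i _ h he => by subst he; exact lt_irrefl p h
  rw [posIn, hsplit, card_union_of_disjoint hdisj, filter_eq']
  split_ifs <;> simp [posIn]

lemma posIn_add_posIn_compl (s : Finset (Fin n)) {p : ℕ} (hp : p ≤ n) :
    posIn s p + posIn sᶜ p = p := by
  induction p with
  | zero => simp [posIn_zero]
  | succ p ih =>
    rw [posIn_succ s (by omega), posIn_succ sᶜ (by omega)]
    simp only [mem_compl]
    split_ifs <;> omega

lemma posIn_insert_of_le (s : Finset (Fin n)) {a i : Fin n} (hi : i ≤ a) :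
    posIn (insert a s) i = posIn s i := by
  rw [posIn, filter_insert, if_neg (not_lt.2 (Fin.le_def.1 hi)), posIn]

lemma posIn_insert_self {s : Finset (Fin n)} {a : Fin n} (h : ∀ b ∈ s, b < a) :
    posIn (insert a s) a = #s := by
  rw [posIn_insert_of_le s le_rfl, posIn, filter_true_of_mem fun b hb => Fin.lt_def.1 (h b hb)]

def altVar (s : Finset (Fin n)) (i : Fin n) : Fin n ⊕ Fin n :=
  if Even (posIn s i) then .inl i else .inr i

noncomputable def altExp (s : Finset (Fin n)) : (Fin n ⊕ Fin n) →₀ ℕ :=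
  ∑ i ∈ s, Finsupp.single (altVar s i) 1

lemma altVar_eq_inl_iff {s : Finset (Fin n)} {i j : Fin n} :
    altVar s j = .inl i ↔ j = i ∧ Even (posIn s j) := by
  unfold altVar; split_ifs <;> aesop

lemma altVar_eq_inr_iff {s : Finset (Fin n)} {i j : Fin n} :
    altVar s j = .inr i ↔ j = i ∧ Odd (posIn s j) := by
  unfold altVar; split_ifs <;> aesop

lemma altExp_inl (s : Finset (Fin n)) (i : Fin n) :
    altExp s (.inl i) = if i ∈ s ∧ Even (posIn s i) then 1 else 0 := by
  simp [altExp, Finsupp.finsetSum_apply, Finsupp.single_apply, altVar_eq_inl_iff, ite_and]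

lemma altExp_inr (s : Finset (Fin n)) (i : Fin n) :
    altExp s (.inr i) = if i ∈ s ∧ Odd (posIn s i) then 1 else 0 := by
  simp [altExp, Finsupp.finsetSum_apply, Finsupp.single_apply, altVar_eq_inr_iff, ite_and]

lemma altExp_insert {s : Finset (Fin n)} {a : Fin n} (h : ∀ b ∈ s, b < a) :
    altExp (insert a s) = altExp s + Finsupp.single (if Even #s then .inl a else .inr a) 1 := by
  have ha : a ∉ s := fun has => (h a has).false
  rw [altExp, sum_insert ha, add_comm, altVar, posIn_insert_self h, altExp]
  congr 1
  refine sum_congr rfl fun i hi => ?_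
  rw [altVar, altVar, posIn_insert_of_le s (h i hi).le]

theorem altMon_eq_monomial (s : Finset (Fin n)) : altMon n s = monomial (altExp s) 1 := by
  induction s using Finset.induction_on_max with
  | empty => simp [altMon, altExp]
  | insert a s h ih =>
    rw [altMon, sort_insert_of_forall_lt h, List.zipIdx_append, List.map_append, List.map_append,
      List.prod_append, ← altMon, ih, altExp_insert h]
    simp only [length_sort, zero_add, List.zipIdx_cons, List.zipIdx_nil, List.map_cons,
      Prod.swap_prod_mk, List.map_nil, List.prod_cons, List.prod_nil, mul_one, Nat.even_iff]
    split_ifs <;> simp [X, monomial_mul]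

noncomputable def xDeg : ((Fin n ⊕ Fin n) →₀ ℕ) →+ ℕ := ∑ i, Finsupp.applyAddHom (.inl i)

noncomputable def yDeg : ((Fin n ⊕ Fin n) →₀ ℕ) →+ ℕ := ∑ i, Finsupp.applyAddHom (.inr i)

lemma xDeg_apply (m : (Fin n ⊕ Fin n) →₀ ℕ) : xDeg m = ∑ i, m (.inl i) := by simp [xDeg]

lemma yDeg_apply (m : (Fin n ⊕ Fin n) →₀ ℕ) : yDeg m = ∑ i, m (.inr i) := by simp [yDeg]

lemma xDeg_altExp (s : Finset (Fin n)) : xDeg (altExp s) = (#s + 1) / 2 := by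
  induction s using Finset.induction_on_max with
  | empty => simp [altExp]
  | insert a s h ih =>
    rw [altExp_insert h, map_add, ih, card_insert_of_notMem fun has => (h a has).false]
    split_ifs with he <;> rw [Nat.even_iff] at he <;>
      simp only [xDeg_apply, Finsupp.single_apply, Sum.inl.injEq, reduceCtorEq, ↓reduceIte,
        sum_ite_eq, sum_const_zero, mem_univ] <;> omega

lemma yDeg_altExp (s : Finset (Fin n)) : yDeg (altExp s) = #s / 2 := by
  induction s using Finset.induction_on_max with
  | empty => simp [altExp]
  | insert a s h ih =>
    rw [altExp_insert h, map_add, ih, card_insert_of_notMem fun has => (h a has).false]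
    split_ifs with he <;> rw [Nat.even_iff] at he <;>
      simp only [yDeg_apply, Finsupp.single_apply, Sum.inr.injEq, reduceCtorEq, ↓reduceIte,
        sum_ite_eq, sum_const_zero, mem_univ] <;> omega

lemma altExp_inl_add_inr (s : Finset (Fin n)) (i : Fin n) :
    altExp s (.inl i) + altExp s (.inr i) = if i ∈ s then 1 else 0 := by
  rw [altExp_inl, altExp_inr]
  by_cases hi : i ∈ s <;> rcases Nat.even_or_odd (posIn s i) with h | h <;>
    simp [hi, h, Nat.not_even_iff_odd.2, Nat.not_odd_iff_even.2]

lemma altExp_add_compl_inl_add_inr (s : Finset (Fin n)) (i : Fin n) :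
    (altExp s + altExp sᶜ) (.inl i) + (altExp s + altExp sᶜ) (.inr i) = 1 := by
  rw [Finsupp.add_apply, Finsupp.add_apply, add_add_add_comm, altExp_inl_add_inr,
    altExp_inl_add_inr]
  by_cases i ∈ s <;> simp [*]

lemma xDeg_altExp_of_odd {s : Finset (Fin n)} (hs : Odd #s) :
    xDeg (altExp s) = yDeg (altExp s) + 1 := by
  obtain ⟨r, hr⟩ := hs
  rw [xDeg_altExp, yDeg_altExp, hr]
  omega

lemma yDeg_altExp_add_compl {k : ℕ} {s : Finset (Fin (2 * k + 2))} (hs : Odd #s)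
    (hsc : Odd #sᶜ) : yDeg (altExp s + altExp sᶜ) = k := by
  have hcard : #sᶜ = 2 * k + 2 - #s := by rw [card_compl, Fintype.card_fin]
  rw [map_add, yDeg_altExp, yDeg_altExp]
  rw [Nat.odd_iff] at hs hsc
  omega

lemma setOf_altMon_eq_image (n : ℕ) :
    {g | ∃ s : Finset (Fin n), Odd #s ∧ g = altMon n s} =
      (monomial · (1 : ℚ)) '' {d | ∃ s : Finset (Fin n), Odd #s ∧ altExp s = d} := by
  ext g
  simp [altMon_eq_monomial, eq_comm]

theorem exists_eq_altExp_add_compl {k : ℕ} {m : (Fin (2 * k + 2) ⊕ Fin (2 * k + 2)) →₀ ℕ}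
    (hm : m ∈ AddSubmonoid.closure {d | ∃ s : Finset (Fin (2 * k + 2)), Odd #s ∧ altExp s = d})
    (hy : yDeg m = k) (hpair : ∀ i, m (.inl i) + m (.inr i) = 1) :
    ∃ s : Finset (Fin (2 * k + 2)), Odd #s ∧ Odd #sᶜ ∧ altExp s + altExp sᶜ = m := by
  have hxy : xDeg m = yDeg m + 2 := by
    have hsum : ∑ i, (m (.inl i) + m (.inr i)) = 2 * k + 2 := by simp [hpair]
    rw [sum_add_distrib, ← yDeg_apply, hy] at hsum
    rw [xDeg_apply, hy]
    omega
  obtain ⟨_, ⟨s, hs, rfl⟩, _, ⟨t, ht, rfl⟩, rfl⟩ :=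
    AddSubmonoid.exists_add_eq_of_mem_closure xDeg yDeg
      (by rintro _ ⟨s, hs, rfl⟩; exact xDeg_altExp_of_odd hs) hm hxy
  obtain rfl : t = sᶜ := by
    ext i
    have := hpair i
    rw [Finsupp.add_apply, Finsupp.add_apply, add_add_add_comm, altExp_inl_add_inr,
      altExp_inl_add_inr] at this
    by_cases i ∈ s <;> by_cases i ∈ t <;> simp_all
  exact ⟨s, hs, ht, rfl⟩

theorem monomial_mem_adjoin_and_iff {k : ℕ} {m : (Fin (2 * k + 2) ⊕ Fin (2 * k + 2)) →₀ ℕ} :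
    (monomial m (1 : ℚ) ∈ Algebra.adjoin ℚ
        {g | ∃ s : Finset (Fin (2 * k + 2)), Odd #s ∧ g = altMon (2 * k + 2) s} ∧
      ∑ i, m (.inr i) = k ∧ ∀ i, m (.inl i) + m (.inr i) = 1) ↔
    ∃ s : Finset (Fin (2 * k + 2)), Odd #s ∧ Odd #sᶜ ∧ altExp s + altExp sᶜ = m := by
  constructor
  · rintro ⟨hmA, hy, hpair⟩
    rw [setOf_altMon_eq_image] at hmA
    exact exists_eq_altExp_add_compl (mem_closure_of_monomial_mem_adjoin hmA)
      (by rwa [yDeg_apply]) hpair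
  · rintro ⟨s, hs, hsc, rfl⟩
    refine ⟨?_, by rw [← yDeg_apply, yDeg_altExp_add_compl hs hsc],
      altExp_add_compl_inl_add_inr s⟩
    rw [← one_mul (1 : ℚ), ← monomial_mul, ← altMon_eq_monomial, ← altMon_eq_monomial]
    exact mul_mem (Algebra.subset_adjoin ⟨s, hs, rfl⟩) (Algebra.subset_adjoin ⟨sᶜ, hsc, rfl⟩)

def sidePos (s : Finset (Fin n)) (i : Fin n) : ℕ := if i ∈ s then posIn s i else posIn sᶜ i

lemma altExp_add_compl_inr (s : Finset (Fin n)) (i : Fin n) :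
    (altExp s + altExp sᶜ) (.inr i) = if Odd (sidePos s i) then 1 else 0 := by
  rw [Finsupp.add_apply, altExp_inr, altExp_inr, sidePos]
  by_cases i ∈ s <;> simp [*]

lemma sidePos_zero (s : Finset (Fin n)) (h : 0 < n) : sidePos s ⟨0, h⟩ = 0 := by
  unfold sidePos; split_ifs <;> exact posIn_zero _

lemma even_sidePos_of_add_one_eq {s : Finset (Fin n)} (hs : Odd #s) (hsc : Odd #sᶜ) {i : Fin n}
    (hi : i.val + 1 = n) : Even (sidePos s i) := by
  have key : ∀ t : Finset (Fin n), i ∈ t → Odd #t → Even (posIn t i) := by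
    intro t hit ht
    have := posIn_succ t i.isLt
    rw [hi, posIn_of_le t le_rfl, Fin.eta, if_pos hit] at this
    rw [this, Nat.odd_add_one, Nat.not_odd_iff_even] at ht
    exact ht
  unfold sidePos
  split_ifs with h
  · exact key s h hs
  · exact key sᶜ (mem_compl.2 h) hsc

lemma sidePos_succ (s : Finset (Fin n)) {i i' : Fin n} (h : i'.val = i.val + 1) :
    sidePos s i' = sidePos s i + 1 ∨ sidePos s i' + sidePos s i = i := by
  obtain ⟨p, hp⟩ := i
  obtain ⟨p', hp'⟩ := i'
  obtain rfl : p' = p + 1 := h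
  have hs := posIn_succ s hp
  have hsc := posIn_succ sᶜ hp
  have hcompl := posIn_add_posIn_compl s hp.le
  unfold sidePos
  simp only [mem_compl] at *
  split_ifs at * <;> omega

-- The exponents of `x₀ (x₁y₂ or y₁x₂) ⋯ (x_{2k-1}y_{2k} or y_{2k-1}x_{2k}) x_{2k+1}`.
structure IsZigzag (k : ℕ) (m : (Fin (2 * k + 2) ⊕ Fin (2 * k + 2)) →₀ ℕ) : Prop where
  inl_add_inr : ∀ i, m (.inl i) + m (.inr i) = 1
  inr_first : m (.inr ⟨0, by omega⟩) = 0
  inr_last : m (.inr ⟨2 * k + 1, by omega⟩) = 0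
  inr_pair : ∀ j : Fin k, m (.inr ⟨2 * j + 1, by omega⟩) + m (.inr ⟨2 * j + 2, by omega⟩) = 1

theorem IsZigzag.ext {k : ℕ} {m m' : (Fin (2 * k + 2) ⊕ Fin (2 * k + 2)) →₀ ℕ}
    (hm : IsZigzag k m) (hm' : IsZigzag k m')
    (h : ∀ j : Fin k, m (.inr ⟨2 * j + 1, by omega⟩) = m' (.inr ⟨2 * j + 1, by omega⟩)) :
    m = m' := by
  have hinr : ∀ i, m (.inr i) = m' (.inr i) := by
    rintro ⟨p, hp⟩
    obtain rfl | hp0 := eq_or_ne p 0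
    · exact hm.inr_first.trans hm'.inr_first.symm
    obtain rfl | hpl := eq_or_ne p (2 * k + 1)
    · exact hm.inr_last.trans hm'.inr_last.symm
    obtain ⟨j, rfl | rfl⟩ : ∃ j, p = 2 * j + 1 ∨ p = 2 * j + 2 := ⟨(p - 1) / 2, by omega⟩
    · exact h ⟨j, by omega⟩
    · have := hm.inr_pair ⟨j, by omega⟩
      have := hm'.inr_pair ⟨j, by omega⟩
      have := h ⟨j, by omega⟩
      dsimp only at *
      omega
  ext (i | i)
  · have := hm.inl_add_inr i
    have := hm'.inl_add_inr i
    have := hinr i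
    omega
  · exact hinr i

theorem isZigzag_altExp_add_compl {k : ℕ} {s : Finset (Fin (2 * k + 2))} (hs : Odd #s)
    (hsc : Odd #sᶜ) : IsZigzag k (altExp s + altExp sᶜ) where
  inl_add_inr := altExp_add_compl_inl_add_inr s
  inr_first := by rw [altExp_add_compl_inr, sidePos_zero]; simp
  inr_last := by
    rw [altExp_add_compl_inr,
      if_neg (Nat.not_odd_iff_even.2 (even_sidePos_of_add_one_eq hs hsc rfl))]
  inr_pair j := by
    rw [altExp_add_compl_inr, altExp_add_compl_inr]
    have := sidePos_succ s (i := ⟨2 * j + 1, by omega⟩) (i' := ⟨2 * j + 2, by omega⟩) rfl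
    simp only [Nat.odd_iff] at this ⊢
    split_ifs <;> omega

def pairSet {k : ℕ} (c : Fin k → Bool) : Finset (Fin (2 * k + 2)) :=
  {i | i.val = 0 ∨ ∃ j : Fin k, c j ∧ (i.val = 2 * j + 1 ∨ i.val = 2 * j + 2)}

section pairSet

variable {k : ℕ} (c : Fin k → Bool)

lemma mem_pairSet_iff {j : Fin k} {i : Fin (2 * k + 2)}
    (hi : i.val = 2 * j + 1 ∨ i.val = 2 * j + 2) : i ∈ pairSet c ↔ c j := by
  simp only [pairSet, mem_filter_univ]
  constructor
  · rintro (h | ⟨j', hj', h'⟩)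
    · omega
    · rwa [show j = j' from Fin.ext (by omega)]
  · exact fun h => .inr ⟨j, h, hi⟩

lemma zero_mem_pairSet : ⟨0, by omega⟩ ∈ pairSet c := by simp [pairSet]

lemma last_notMem_pairSet : ⟨2 * k + 1, by omega⟩ ∉ pairSet c := by
  simp only [pairSet, mem_filter_univ, not_or, not_exists, not_and]
  exact ⟨by omega, fun j _ => by omega⟩

lemma odd_posIn_pairSet : ∀ j ≤ k, Odd (posIn (pairSet c) (2 * j + 1))
  | 0, _ => by
    rw [posIn_succ _ (by omega), posIn_zero, if_pos (zero_mem_pairSet c)]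
    exact odd_one
  | j + 1, hj => by
    have ih := odd_posIn_pairSet j (by omega)
    rw [show 2 * (j + 1) + 1 = 2 * j + 1 + 1 + 1 by ring, posIn_succ _ (by omega),
      posIn_succ _ (by omega)]
    have hodd : (⟨2 * j + 1, by omega⟩ : Fin (2 * k + 2)) ∈ pairSet c ↔ c ⟨j, hj⟩ :=
      mem_pairSet_iff c (Or.inl rfl)
    have heven : (⟨2 * j + 2, by omega⟩ : Fin (2 * k + 2)) ∈ pairSet c ↔ c ⟨j, hj⟩ :=
      mem_pairSet_iff c (Or.inr rfl)
    simp only [hodd, heven]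
    split_ifs <;> simpa [add_assoc, Nat.odd_add_one] using ih

lemma odd_card_pairSet : Odd #(pairSet c) ∧ Odd #(pairSet c)ᶜ := by
  have hodd := odd_posIn_pairSet c k le_rfl
  have hlast := posIn_succ (pairSet c) (p := 2 * k + 1) (by omega)
  have hlast' := posIn_succ (pairSet c)ᶜ (p := 2 * k + 1) (by omega)
  have hcompl := posIn_add_posIn_compl (pairSet c) (p := 2 * k + 1) (by omega)
  rw [posIn_of_le _ le_rfl, if_neg (last_notMem_pairSet c)] at hlast
  rw [posIn_of_le _ le_rfl, if_pos (mem_compl.2 (last_notMem_pairSet c))] at hlast'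
  rw [hlast, hlast']
  simp only [Nat.odd_iff] at hodd ⊢
  omega

lemma altExp_add_compl_pairSet_inr (j : Fin k) :
    (altExp (pairSet c) + altExp (pairSet c)ᶜ) (.inr ⟨2 * j + 1, by omega⟩) =
      if c j then 1 else 0 := by
  have hodd := odd_posIn_pairSet c j j.isLt.le
  have hcompl := posIn_add_posIn_compl (pairSet c) (p := 2 * j + 1) (by omega)
  have hmem : (⟨2 * j + 1, by omega⟩ : Fin (2 * k + 2)) ∈ pairSet c ↔ c j :=
    mem_pairSet_iff c (Or.inl rfl)
  rw [altExp_add_compl_inr, sidePos]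
  simp only [hmem, Nat.odd_iff] at hodd ⊢
  cases c j <;> split_ifs <;> omega

end pairSet

theorem exists_altExp_add_compl_iff_mem_range {k : ℕ}
    {m : (Fin (2 * k + 2) ⊕ Fin (2 * k + 2)) →₀ ℕ} :
    (∃ s : Finset (Fin (2 * k + 2)), Odd #s ∧ Odd #sᶜ ∧ altExp s + altExp sᶜ = m) ↔
      m ∈ Set.range fun c : Fin k → Bool => altExp (pairSet c) + altExp (pairSet c)ᶜ := by
  constructor
  · rintro ⟨s, hs, hsc, rfl⟩
    have hm := isZigzag_altExp_add_compl hs hsc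
    refine ⟨fun j => (altExp s + altExp sᶜ) (.inr ⟨2 * j + 1, by omega⟩) = 1, IsZigzag.ext
      (isZigzag_altExp_add_compl (odd_card_pairSet _).1 (odd_card_pairSet _).2) hm fun j => ?_⟩
    have := hm.inl_add_inr ⟨2 * j + 1, by omega⟩
    rw [altExp_add_compl_pairSet_inr]
    split_ifs with h <;> simp only [decide_eq_true_eq] at h <;> omega
  · rintro ⟨c, rfl⟩
    exact ⟨pairSet c, (odd_card_pairSet c).1, (odd_card_pairSet c).2, rfl⟩

lemma injective_altExp_add_compl_pairSet {k : ℕ} :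
    Function.Injective fun c : Fin k → Bool => altExp (pairSet c) + altExp (pairSet c)ᶜ := by
  intro c c' h
  funext j
  have := DFunLike.congr_fun h (.inr ⟨2 * j + 1, by omega⟩)
  simp only [altExp_add_compl_pairSet_inr] at this
  revert this
  cases c j <;> cases c' j <;> simp

end AltMon

/-- With the initial monomials `in(Q_{i₀…i_{2k}}) = x_{i₀} y_{i₁} ⋯ x_{i_{2k}}`
for all odd subsets of `{1,…,n}`, `n = 2k+2`, the number of monomials of multidegree
`(k,1,…,1)` in the algebra they generate is `2^k`. -/
theorem stmt12 (k : ℕ)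
    (A : Subalgebra ℚ (MvPolynomial (Fin (2 * k + 2) ⊕ Fin (2 * k + 2)) ℚ))
    (hA : A = Algebra.adjoin ℚ
      {g | ∃ s : Finset (Fin (2 * k + 2)), Odd s.card ∧ g = altMon (2 * k + 2) s}) :
    Nat.card {m : (Fin (2 * k + 2) ⊕ Fin (2 * k + 2)) →₀ ℕ //
        (MvPolynomial.monomial m (1 : ℚ)) ∈ A ∧
        (∑ i : Fin (2 * k + 2), m (Sum.inr i)) = k ∧
        (∀ i : Fin (2 * k + 2), m (Sum.inl i) + m (Sum.inr i) = 1)}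
      = 2 ^ k := by
  subst hA
  rw [Nat.card_congr (Equiv.subtypeEquivRight fun m =>
    AltMon.monomial_mem_adjoin_and_iff.trans AltMon.exists_altExp_add_compl_iff_mem_range),
    Nat.card_range_of_injective AltMon.injective_altExp_add_compl_pairSet]
  simp
end

section
/- Let n = 2k+1 be odd and let p_{ij} (1 ≤ i < j ≤ n) be nonzero scalars. The polynomial Q = Σ ± (∏_{i,j} p_{a_i a_j})(∏_{r,s} p_{b_r b_s}) x_{a₀}⋯x_{a_k} y_{b₁}⋯y_{b_k}, summed over partitions {1,…,n} = {a₀,…,a_k} ⊔ {b₁,…,b_k}, which equals the determinant of the matrix (1.7) built from a 2×n matrix with Plücker coordinates p_{ij}, is invariant under the substitution y_i ↦ y_i + λ_i x_i for every λ in the kernel relation space G = rowspan of the 2×n matrix. -/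
/-!
Write `λ = c₀ b₀ + c₁ b₁`. The substitution fixes the `x`-rows `2m` of the matrix and sends the
`y`-row `2m + 1`, with coefficients `b₀ₗ^(k-1-m) b₁ₗ^m`, to itself plus
`b₀ₗ^(k-1-m) b₁ₗ^m (c₀ b₀ₗ + c₁ b₁ₗ) xₗ`, which is `c₀` times row `2m` plus `c₁` times row `2m + 2`.
So the substituted matrix is `(1 + N) M` where `N` only maps even rows into odd rows; `1 + N` is
block triangular with identity diagonal blocks, hence has determinant one.
-/

open Matrix

namespace Matrix

variable {m R : Type*} [Fintype m] [DecidableEq m] [CommRing R]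

theorem det_one_add_of_apply_eq_zero {N : Matrix m m R} (p : m → Prop) [DecidablePred p]
    (hN : ∀ i j, p i ∨ ¬p j → N i j = 0) : (1 + N).det = 1 := by
  have hblock (q : m → Prop) [DecidablePred q] (hq : ∀ i j, q i → q j → N i j = 0) :
      (toSquareBlockProp (1 + N) q).det = 1 := by
    have : toSquareBlockProp (1 + N) q = 1 := by
      ext i j
      simp [toSquareBlockProp_def, hq i j i.2 j.2, one_apply, Subtype.ext_iff]
    rw [this, det_one]
  rw [twoBlockTriangular_det' _ p, hblock p, hblock (¬p ·), one_mul]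
  · exact fun i j _ hj => hN i j (.inr hj)
  · exact fun i j hi _ => hN i j (.inl hi)
  · intro i hi j hj
    rw [add_apply, hN i j (.inl hi), one_apply_ne (by rintro rfl; exact hj hi), add_zero]

theorem det_add_mul_self_of_apply_eq_zero (M : Matrix m m R) {N : Matrix m m R}
    (p : m → Prop) [DecidablePred p] (hN : ∀ i j, p i ∨ ¬p j → N i j = 0) :
    (M + N * M).det = M.det := by
  rw [← one_add_mul, det_mul, det_one_add_of_apply_eq_zero p hN, one_mul]

section OddRowShift

variable {R : Type*} [CommRing R] {k : ℕ}

/-- Left multiplication by `oddRowShift c₀ c₁` adds `c₀` times the row above and `c₁` times the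
row below to every odd-indexed row. -/
def oddRowShift (c₀ c₁ : R) : Matrix (Fin (2 * k + 1)) (Fin (2 * k + 1)) R :=
  fun r j =>
    if (r : ℕ) % 2 = 1 ∧ (j : ℕ) + 1 = r then c₀
    else if (r : ℕ) % 2 = 1 ∧ (j : ℕ) = r + 1 then c₁ else 0

theorem oddRowShift_apply_eq_zero (c₀ c₁ : R) (r j : Fin (2 * k + 1))
    (h : (r : ℕ) % 2 = 0 ∨ ¬(j : ℕ) % 2 = 0) : oddRowShift c₀ c₁ r j = 0 := by
  unfold oddRowShift
  split_ifs <;> first | rfl | omega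

theorem oddRowShift_mul_apply_of_odd (c₀ c₁ : R)
    (M : Matrix (Fin (2 * k + 1)) (Fin (2 * k + 1)) R)
    {r : Fin (2 * k + 1)} (hr : (r : ℕ) % 2 = 1) (l : Fin (2 * k + 1)) :
    (oddRowShift c₀ c₁ * M : Matrix _ _ R) r l =
      c₀ * M ⟨r - 1, by omega⟩ l + c₁ * M ⟨r + 1, by have := r.isLt; omega⟩ l := by
  have := r.isLt
  rw [mul_apply, Fintype.sum_eq_add ⟨r - 1, by omega⟩ ⟨r + 1, by omega⟩
    (Fin.ne_of_val_ne (by dsimp only; omega))]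
  · simp only [oddRowShift]
    rw [if_pos ⟨hr, by omega⟩, if_neg (by omega), if_pos ⟨hr, trivial⟩]
  · rintro j ⟨h₁, h₂⟩
    simp only [oddRowShift, Ne, Fin.ext_iff] at h₁ h₂ ⊢
    rw [if_neg (by omega), if_neg (by omega), zero_mul]

end OddRowShift

end Matrix

theorem pow_mul_pow_mul_linear_comb {R : Type*} [CommRing R] {k m : ℕ} (u v c₀ c₁ : R)
    (hm : m < k) :
    u ^ (k - 1 - m) * v ^ m * (c₀ * u + c₁ * v) =
      c₀ * (u ^ (k - m) * v ^ m) + c₁ * (u ^ (k - (m + 1)) * v ^ (m + 1)) := by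
  obtain ⟨e, rfl⟩ := Nat.exists_eq_add_of_lt hm
  rw [show m + e + 1 - 1 - m = e by omega, show m + e + 1 - m = e + 1 by omega,
    show m + e + 1 - (m + 1) = e by omega]
  ring

open MvPolynomial

theorem stmt13_general (K : Type*) [Field K] (k : ℕ)
    (b : Fin 2 → Fin (2 * k + 1) → K)
    (M : Matrix (Fin (2 * k + 1)) (Fin (2 * k + 1))
      (MvPolynomial (Fin (2 * k + 1) ⊕ Fin (2 * k + 1)) K))
    (hM : ∀ r l, M r l =
      if (r : ℕ) % 2 = 0 then
        C (b 0 l ^ (k - (r : ℕ) / 2) * b 1 l ^ ((r : ℕ) / 2)) * X (Sum.inl l)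
      else
        C (b 0 l ^ (k - 1 - (r : ℕ) / 2) * b 1 l ^ ((r : ℕ) / 2)) * X (Sum.inr l))
    (lam : Fin (2 * k + 1) → K)
    (hlam : ∃ c : Fin 2 → K, lam = fun l => c 0 * b 0 l + c 1 * b 1 l) :
    MvPolynomial.aeval
        (Sum.elim (fun i => X (Sum.inl i))
          (fun i => X (Sum.inr i) + C (lam i) * X (Sum.inl i)))
        M.det
      = M.det := by
  obtain ⟨c, rfl⟩ := hlam
  have hshift : (aeval (Sum.elim (fun i => X (Sum.inl i))
      (fun i => X (Sum.inr i) + C (c 0 * b 0 i + c 1 * b 1 i) * X (Sum.inl i)))).mapMatrix M =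
      M + oddRowShift (C (c 0)) (C (c 1)) * M := by
    refine Matrix.ext fun r l => ?_
    rcases Nat.mod_two_eq_zero_or_one r with hr | hr
    · simp [mul_apply, oddRowShift_apply_eq_zero _ _ r _ (.inl hr), hM, hr]
    · have hm : (r : ℕ) / 2 < k := by omega
      have hcoeff := congrArg (C (σ := Fin (2 * k + 1) ⊕ Fin (2 * k + 1)))
        (pow_mul_pow_mul_linear_comb (b 0 l) (b 1 l) (c 0) (c 1) hm)
      rw [Matrix.add_apply, oddRowShift_mul_apply_of_odd _ _ _ hr]
      simp only [AlgHom.mapMatrix_apply, map_apply, hM, hr, if_neg one_ne_zero,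
        show ((r : ℕ) - 1) % 2 = 0 by omega, show ((r : ℕ) + 1) % 2 = 0 by omega,
        show ((r : ℕ) - 1) / 2 = r / 2 by omega, show ((r : ℕ) + 1) / 2 = r / 2 + 1 by omega,
        if_true, map_mul, map_add, map_pow, aeval_C, aeval_X, algebraMap_eq, Sum.elim_inr]
        at hcoeff ⊢
      linear_combination X (Sum.inl l) * hcoeff
  rw [AlgHom.map_det, hshift, det_add_mul_self_of_apply_eq_zero M (fun i => (i : ℕ) % 2 = 0)
    (oddRowShift_apply_eq_zero _ _)]

/-- For `n = 2k+1`, the Castravet–Tevelev determinant `Q_{1…n}` (the determinant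
of the `(2k+1)×(2k+1)` matrix whose rows alternate `b₁ₗ^{k−m} b₂ₗ^m xₗ` and
`b₁ₗ^{k−1−m} b₂ₗ^m yₗ`) is invariant under the Nagata action `yᵢ ↦ yᵢ + λᵢ xᵢ` for every
`λ` in the row span `G` of the `2×n` matrix `b`. -/
theorem stmt13 (K : Type*) [Field K] (k : ℕ)
    (b : Fin 2 → Fin (2 * k + 1) → K)
    (hpl : ∀ i j : Fin (2 * k + 1), i ≠ j → b 0 i * b 1 j - b 0 j * b 1 i ≠ 0)
    (M : Matrix (Fin (2 * k + 1)) (Fin (2 * k + 1))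
      (MvPolynomial (Fin (2 * k + 1) ⊕ Fin (2 * k + 1)) K))
    (hM : ∀ r l, M r l =
      if (r : ℕ) % 2 = 0 then
        C (b 0 l ^ (k - (r : ℕ) / 2) * b 1 l ^ ((r : ℕ) / 2)) * X (Sum.inl l)
      else
        C (b 0 l ^ (k - 1 - (r : ℕ) / 2) * b 1 l ^ ((r : ℕ) / 2)) * X (Sum.inr l))
    (lam : Fin (2 * k + 1) → K)
    (hlam : ∃ c : Fin 2 → K, lam = fun l => c 0 * b 0 l + c 1 * b 1 l) :
    MvPolynomial.aeval
        (Sum.elim (fun i => X (Sum.inl i))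
          (fun i => X (Sum.inr i) + C (lam i) * X (Sum.inl i)))
        M.det
      = M.det :=
  stmt13_general K k b M hM lam hlam
end

section
/- Let G ⊂ K^4 be two-dimensional with all Plücker coordinates p_{ij} nonzero satisfying p₁₂p₃₄ − p₁₃p₂₄ + p₁₄p₂₃ = 0, and E₁ = p₂₃x₂x₃y₄ − p₂₄x₂y₃x₄ + p₃₄y₂x₃x₄, with E₂, E₃, E₄ defined analogously. Then the relations p₁₄x₁E₁ − p₂₄x₂E₂ + p₃₄x₃E₃ = 0, p₁₃x₁E₁ − p₂₃x₂E₂ + p₃₄x₄E₄ = 0, p₁₂x₂E₂ − p₁₃x₃E₃ + p₁₄x₄E₄ = 0, and p₁₂x₁E₁ − p₂₃x₃E₃ + p₂₄x₄E₄ = 0 hold identically in K[x₁,…,x₄,y₁,…,y₄]. -/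
open MvPolynomial

/-- With `E₁,…,E₄` the Cox–Nagata generators for `d = 2, n = 4` built from
Plücker coordinates `p_{ij}` satisfying the Plücker relation, the four stated relations
hold identically in `K[x₁,…,x₄,y₁,…,y₄]`. Here variable `Sum.inl i` is `x_{i+1}` and
`Sum.inr i` is `y_{i+1}`. -/
theorem stmt18 (K : Type*) [Field K]
    (p : Fin 4 → Fin 4 → K)
    (hp : ∀ i j, i < j → p i j ≠ 0)
    (hpluecker : p 0 1 * p 2 3 - p 0 2 * p 1 3 + p 0 3 * p 1 2 = 0)
    (x y : Fin 4 → MvPolynomial (Fin 4 ⊕ Fin 4) K)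
    (hx : ∀ i, x i = X (Sum.inl i)) (hy : ∀ i, y i = X (Sum.inr i))
    (E₁ E₂ E₃ E₄ : MvPolynomial (Fin 4 ⊕ Fin 4) K)
    (hE₁ : E₁ = C (p 1 2) * (x 1 * x 2 * y 3) - C (p 1 3) * (x 1 * y 2 * x 3)
      + C (p 2 3) * (y 1 * x 2 * x 3))
    (hE₂ : E₂ = C (p 0 2) * (x 0 * x 2 * y 3) - C (p 0 3) * (x 0 * y 2 * x 3)
      + C (p 2 3) * (y 0 * x 2 * x 3))
    (hE₃ : E₃ = C (p 0 1) * (x 0 * x 1 * y 3) - C (p 0 3) * (x 0 * y 1 * x 3)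
      + C (p 1 3) * (y 0 * x 1 * x 3))
    (hE₄ : E₄ = C (p 0 1) * (x 0 * x 1 * y 2) - C (p 0 2) * (x 0 * y 1 * x 2)
      + C (p 1 2) * (y 0 * x 1 * x 2)) :
    C (p 0 3) * x 0 * E₁ - C (p 1 3) * x 1 * E₂ + C (p 2 3) * x 2 * E₃ = 0 ∧
    C (p 0 2) * x 0 * E₁ - C (p 1 2) * x 1 * E₂ + C (p 2 3) * x 3 * E₄ = 0 ∧
    C (p 0 1) * x 1 * E₂ - C (p 0 2) * x 2 * E₃ + C (p 0 3) * x 3 * E₄ = 0 ∧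
    C (p 0 1) * x 0 * E₁ - C (p 1 2) * x 2 * E₃ + C (p 1 3) * x 3 * E₄ = 0 := by
  subst hE₁ hE₂ hE₃ hE₄
  have h : (C (p 0 1 * p 2 3 - p 0 2 * p 1 3 + p 0 3 * p 1 2) : MvPolynomial (Fin 4 ⊕ Fin 4) K) = 0 := by
    rw [hpluecker, C_0]
  simp only [map_sub, map_add, map_mul] at h
  refine ⟨?_, ?_, ?_, ?_⟩
  · linear_combination (x 0 * x 1 * x 2 * y 3) * h
  · linear_combination (x 0 * x 1 * y 2 * x 3) * h
  · linear_combination (y 0 * x 1 * x 2 * x 3) * h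
  · linear_combination (x 0 * y 1 * x 2 * x 3) * h
end
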